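/- arXiv:1512.03968 — 12 statements merged into one kernel-verified Lean document; each statement's English description precedes it below -/
import Mathlib

section
/- Let (X,d) be a b-metric space with constant s ≥ 1, and let (x_n) be a sequence in X. If there exists γ > log₂ s such that the series Σ_{n≥1} n^γ · d(x_n, x_{n+1}) converges, then (x_n) is a Cauchy sequence. -/
/-!
Cut the chain `x p, x (p+1), …, x q` at the indices `p - 1 + 2 ^ (R * j)`. Between consecutive
cuts there are at most `2 ^ (R * (j + 1))` steps, so halving repeatedly costs a factor
`s ^ (R * (j + 1))` on the sum of the step lengths there, while the outer chain over the blocks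
costs `s ^ (j + 1)`. In block `j` every index is at least `2 ^ (R * j)`, so the weight `n ^ γ`
absorbs all of this once `s ^ (R + 1) ≤ 2 ^ (R * γ)`, which some `R` achieves because
`log₂ s < γ`. Hence `d (x p) (x q) ≤ s ^ (R + 1) * ∑_{p ≤ n < q} n ^ γ * d (x n) (x (n + 1))`,
and the right side is bounded by a tail of a convergent series.
-/

open Filter Topology Finset

theorem Finset.sum_range_sum_Ico_of_monotone {M : Type*} [AddCommMonoid M] (f : ℕ → M)
    {c : ℕ → ℕ} (hc : Monotone c) (J : ℕ) :
    ∑ j ∈ range J, ∑ i ∈ Ico (c j) (c (j + 1)), f i = ∑ i ∈ Ico (c 0) (c J), f i := by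
  induction J with
  | zero => simp
  | succ J ih =>
    rw [sum_range_succ, ih, sum_Ico_consecutive _ (hc (Nat.zero_le J)) (hc J.le_succ)]

theorem sum_Ico_le_tsum_nat_add {f : ℕ → ℝ} (hf0 : ∀ n, 0 ≤ f n) (hf : Summable f) (p q : ℕ) :
    ∑ i ∈ Ico p q, f i ≤ ∑' k, f (k + p) := by
  rw [sum_Ico_eq_sum_range]
  simp_rw [add_comm p]
  exact ((summable_nat_add_iff p).2 hf).sum_le_tsum _ fun i _ => hf0 _

theorem exists_pow_succ_le_two_pow_rpow {s γ : ℝ} (hs : 0 < s) (hγ : Real.logb 2 s < γ) :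
    ∃ R : ℕ, 0 < R ∧ s ^ (R + 1) ≤ ((2 : ℝ) ^ R) ^ γ := by
  set ν := Real.logb 2 s
  set R := ⌈ν / (γ - ν)⌉₊ + 1
  refine ⟨R, Nat.succ_pos _, ?_⟩
  have hR : ν / (γ - ν) ≤ R := by
    simp only [R]
    push_cast
    linarith [Nat.le_ceil (ν / (γ - ν))]
  rw [div_le_iff₀ (sub_pos.2 hγ)] at hR
  calc s ^ (R + 1) = (2 : ℝ) ^ (ν * (R + 1 : ℕ)) := by
        rw [Real.rpow_mul zero_le_two, Real.rpow_logb two_pos (by norm_num) hs, Real.rpow_natCast]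
    _ ≤ (2 : ℝ) ^ ((R : ℝ) * γ) :=
        Real.rpow_le_rpow_of_exponent_le one_le_two (by push_cast; nlinarith)
    _ = ((2 : ℝ) ^ R) ^ γ := by rw [Real.rpow_mul zero_le_two, Real.rpow_natCast]

namespace BMetric

variable {X : Type*} {d : X → X → ℝ} {s : ℝ}

theorem le_sum_pow_succ_mul (hs : 0 ≤ s) (hrefl : ∀ z, d z z = 0)
    (htri : ∀ x y z, d x y ≤ s * (d x z + d z y)) (y : ℕ → X) (t : ℕ) :
    d (y 0) (y t) ≤ ∑ j ∈ range t, s ^ (j + 1) * d (y j) (y (j + 1)) := by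
  induction t generalizing y with
  | zero => simp [hrefl]
  | succ t ih =>
    calc d (y 0) (y (t + 1)) ≤ s * (d (y 0) (y 1) + d (y 1) (y (t + 1))) := htri _ _ _
      _ ≤ s * (d (y 0) (y 1) + ∑ j ∈ range t, s ^ (j + 1) * d (y (j + 1)) (y (j + 1 + 1))) := by
          gcongr
          exact ih fun j => y (j + 1)
      _ = ∑ j ∈ range (t + 1), s ^ (j + 1) * d (y j) (y (j + 1)) := by
          rw [sum_range_succ', mul_add, mul_sum, add_comm]
          congr 1
          · exact sum_congr rfl fun j _ => by ring
          · ring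

theorem le_pow_mul_sum_Ico (hs : 0 ≤ s) (hrefl : ∀ z, d z z = 0)
    (htri : ∀ x y z, d x y ≤ s * (d x z + d z y)) (y : ℕ → X) {k a b : ℕ} (hab : a ≤ b)
    (hb : b ≤ a + 2 ^ k) :
    d (y a) (y b) ≤ s ^ k * ∑ i ∈ Ico a b, d (y i) (y (i + 1)) := by
  induction k generalizing a b with
  | zero =>
    obtain rfl | rfl : b = a ∨ b = a + 1 := by omega
    · simp [hrefl]
    · simp
  | succ k ih =>
    set c := min (a + 2 ^ k) b
    have hac : a ≤ c := by omega
    have hcb : c ≤ b := min_le_right _ _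
    rw [pow_succ] at hb
    calc d (y a) (y b) ≤ s * (d (y a) (y c) + d (y c) (y b)) := htri _ _ _
      _ ≤ s * (s ^ k * ∑ i ∈ Ico a c, d (y i) (y (i + 1))
            + s ^ k * ∑ i ∈ Ico c b, d (y i) (y (i + 1))) := by
          gcongr
          exacts [ih hac (by omega), ih hcb (by omega)]
      _ = s ^ (k + 1) * ∑ i ∈ Ico a b, d (y i) (y (i + 1)) := by
          rw [← sum_Ico_consecutive _ hac hcb]
          ring

theorem pow_succ_mul_le_pow_mul_sum_rpow_mul (hs : 0 ≤ s) (hd0 : ∀ x y, 0 ≤ d x y)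
    (hrefl : ∀ z, d z z = 0) (htri : ∀ x y z, d x y ≤ s * (d x z + d z y)) {γ : ℝ} (hγ : 0 ≤ γ)
    {R : ℕ} (hR : s ^ (R + 1) ≤ ((2 : ℝ) ^ R) ^ γ) (y : ℕ → X) {j a b : ℕ} (hab : a ≤ b)
    (hb : b ≤ a + 2 ^ (R * (j + 1))) (hw : ∀ n ∈ Ico a b, 2 ^ (R * j) ≤ n + 1) :
    s ^ (j + 1) * d (y a) (y b) ≤
      s ^ (R + 1) * ∑ n ∈ Ico a b, ((n : ℝ) + 1) ^ γ * d (y n) (y (n + 1)) := by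
  have hpow : (((2 : ℝ) ^ R) ^ γ) ^ j = ((2 ^ (R * j) : ℕ) : ℝ) ^ γ := by
    push_cast
    rw [← Real.rpow_natCast, ← Real.rpow_mul (by positivity), mul_comm,
      Real.rpow_mul (by positivity), Real.rpow_natCast, ← pow_mul]
  calc s ^ (j + 1) * d (y a) (y b)
      ≤ s ^ (j + 1) * (s ^ (R * (j + 1)) * ∑ n ∈ Ico a b, d (y n) (y (n + 1))) := by
        gcongr
        exact le_pow_mul_sum_Ico hs hrefl htri y hab hb
    _ = s ^ (R + 1) * ((s ^ (R + 1)) ^ j * ∑ n ∈ Ico a b, d (y n) (y (n + 1))) := by ring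
    _ ≤ s ^ (R + 1) * ((((2 : ℝ) ^ R) ^ γ) ^ j * ∑ n ∈ Ico a b, d (y n) (y (n + 1))) := by
        gcongr
        exact sum_nonneg fun n _ => hd0 _ _
    _ = s ^ (R + 1) * ∑ n ∈ Ico a b, ((2 ^ (R * j) : ℕ) : ℝ) ^ γ * d (y n) (y (n + 1)) := by
        rw [hpow, mul_sum]
    _ ≤ s ^ (R + 1) * ∑ n ∈ Ico a b, ((n : ℝ) + 1) ^ γ * d (y n) (y (n + 1)) := by
        gcongr with n hn
        · exact hd0 _ _
        · exact_mod_cast hw n hn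

theorem le_pow_mul_sum_rpow_mul (hs : 0 ≤ s) (hd0 : ∀ x y, 0 ≤ d x y) (hrefl : ∀ z, d z z = 0)
    (htri : ∀ x y z, d x y ≤ s * (d x z + d z y)) {γ : ℝ} (hγ : 0 ≤ γ) {R : ℕ} (hR0 : 0 < R)
    (hR : s ^ (R + 1) ≤ ((2 : ℝ) ^ R) ^ γ) (y : ℕ → X) (t : ℕ) :
    d (y 0) (y t) ≤ s ^ (R + 1) * ∑ n ∈ range t, ((n : ℝ) + 1) ^ γ * d (y n) (y (n + 1)) := by
  set c : ℕ → ℕ := fun j => min (2 ^ (R * j) - 1) t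
  have hc : Monotone c := fun i j hij =>
    min_le_min_right _ (Nat.sub_le_sub_right (Nat.pow_le_pow_right two_pos
      (Nat.mul_le_mul_left R hij)) 1)
  have hc0 : c 0 = 0 := by simp [c]
  have hct : c t = t := by
    have := Nat.lt_two_pow_self (n := t)
    have := Nat.pow_le_pow_right two_pos (Nat.le_mul_of_pos_left t hR0)
    exact min_eq_right (by omega)
  have hlen (j : ℕ) : c (j + 1) ≤ c j + 2 ^ (R * (j + 1)) :=
    ((min_le_left _ _).trans (Nat.sub_le _ _)).trans (Nat.le_add_left _ _)
  have hweight (j : ℕ) : ∀ n ∈ Ico (c j) (c (j + 1)), 2 ^ (R * j) ≤ n + 1 := by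
    intro n hn
    have hn' := mem_Ico.1 hn
    have hcj : c j = min (2 ^ (R * j) - 1) t := rfl
    have hct' : c (j + 1) ≤ t := min_le_right _ _
    omega
  have hblock (j : ℕ) := pow_succ_mul_le_pow_mul_sum_rpow_mul hs hd0 hrefl htri hγ hR y
    (hc (Nat.le_add_right j 1)) (hlen j) (hweight j)
  calc d (y 0) (y t) = d (y (c 0)) (y (c t)) := by rw [hc0, hct]
    _ ≤ ∑ j ∈ range t, s ^ (j + 1) * d (y (c j)) (y (c (j + 1))) :=
        le_sum_pow_succ_mul hs hrefl htri (y ∘ c) t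
    _ ≤ ∑ j ∈ range t, s ^ (R + 1) *
          ∑ n ∈ Ico (c j) (c (j + 1)), ((n : ℝ) + 1) ^ γ * d (y n) (y (n + 1)) :=
        sum_le_sum fun j _ => hblock j
    _ = s ^ (R + 1) * ∑ n ∈ range t, ((n : ℝ) + 1) ^ γ * d (y n) (y (n + 1)) := by
        rw [← mul_sum, sum_range_sum_Ico_of_monotone _ hc, hc0, hct, range_eq_Ico]

theorem le_pow_mul_sum_Ico_rpow_mul (hs : 0 ≤ s) (hd0 : ∀ x y, 0 ≤ d x y)
    (hrefl : ∀ z, d z z = 0) (htri : ∀ x y z, d x y ≤ s * (d x z + d z y)) {γ : ℝ} (hγ : 0 ≤ γ)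
    {R : ℕ} (hR0 : 0 < R) (hR : s ^ (R + 1) ≤ ((2 : ℝ) ^ R) ^ γ) (x : ℕ → X) {p q : ℕ}
    (hp : 1 ≤ p) (hpq : p ≤ q) :
    d (x p) (x q) ≤ s ^ (R + 1) * ∑ i ∈ Ico p q, (i : ℝ) ^ γ * d (x i) (x (i + 1)) := by
  have h := le_pow_mul_sum_rpow_mul hs hd0 hrefl htri hγ hR0 hR (fun n => x (p + n)) (q - p)
  simp only [add_zero, ← add_assoc, Nat.add_sub_cancel' hpq] at h
  rw [sum_Ico_eq_sum_range]
  refine h.trans (mul_le_mul_of_nonneg_left (sum_le_sum fun n _ => ?_) (by positivity))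
  gcongr
  · exact hd0 _ _
  · exact_mod_cast (by omega : n + 1 ≤ p + n)

end BMetric

theorem bmetric_cauchy_of_summable_rpow
    (X : Type*) (d : X → X → ℝ) (s : ℝ) (hs : 1 ≤ s)
    (hd_nonneg : ∀ x y, 0 ≤ d x y)
    (hd_eq : ∀ x y, d x y = 0 ↔ x = y)
    (hd_symm : ∀ x y, d x y = d y x)
    (hd_tri : ∀ x y z, d x y ≤ s * (d x z + d z y))
    (x : ℕ → X) (γ : ℝ) (hγ : Real.logb 2 s < γ)
    (hsum : Summable (fun n : ℕ => (n : ℝ) ^ γ * d (x n) (x (n + 1)))) :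
    ∀ ε > 0, ∃ N : ℕ, ∀ m ≥ N, ∀ n ≥ N, d (x m) (x n) < ε := by
  have hrefl : ∀ z, d z z = 0 := fun z => (hd_eq z z).2 rfl
  have hs0 : 0 < s := zero_lt_one.trans_le hs
  have hγ0 : 0 ≤ γ := (Real.logb_nonneg one_lt_two hs).trans hγ.le
  obtain ⟨R, hR0, hR⟩ := exists_pow_succ_le_two_pow_rpow hs0 hγ
  set f := fun n : ℕ => (n : ℝ) ^ γ * d (x n) (x (n + 1))
  have hf0 (n : ℕ) : 0 ≤ f n := mul_nonneg (by positivity) (hd_nonneg _ _)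
  have hbound (p q : ℕ) (hp : 1 ≤ p) (hpq : p ≤ q) :
      d (x p) (x q) ≤ s ^ (R + 1) * ∑' k, f (k + p) := by
    refine (BMetric.le_pow_mul_sum_Ico_rpow_mul hs0.le hd_nonneg hrefl hd_tri hγ0 hR0 hR x
      hp hpq).trans ?_
    gcongr
    exact sum_Ico_le_tsum_nat_add hf0 hsum p q
  have htail : Tendsto (fun p => s ^ (R + 1) * ∑' k, f (k + p)) atTop (𝓝 0) := by
    simpa using (tendsto_sum_nat_add f).const_mul (s ^ (R + 1))
  intro ε hε
  obtain ⟨N, hN⟩ :=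
    eventually_atTop.1 ((htail.eventually (gt_mem_nhds hε)).and (eventually_ge_atTop 1))
  refine ⟨N, fun m hm n hn => ?_⟩
  rcases le_total m n with hmn | hnm
  · exact (hbound m n (hN m hm).2 hmn).trans_lt (hN m hm).1
  · rw [hd_symm]
    exact (hbound n m (hN n hn).2 hnm).trans_lt (hN n hn).1
end

section
/- Let (X,d) be a b-metric space with constant s ≥ 1 and (x_n) a sequence in X. If there exists α > 1 such that the series Σ_{n≥1} α^n · d(x_n, x_{n+1}) converges, then (x_n) is Cauchy. -/
theorem bmetric_cauchy_of_summable_geom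
    (X : Type*) (d : X → X → ℝ) (s : ℝ) (hs : 1 ≤ s)
    (hd_nonneg : ∀ x y, 0 ≤ d x y)
    (hd_eq : ∀ x y, d x y = 0 ↔ x = y)
    (hd_symm : ∀ x y, d x y = d y x)
    (hd_tri : ∀ x y z, d x y ≤ s * (d x z + d z y))
    (x : ℕ → X) (α : ℝ) (hα : 1 < α)
    (hsum : Summable (fun n : ℕ => α ^ n * d (x n) (x (n + 1)))) :
    ∀ ε > 0, ∃ N : ℕ, ∀ m ≥ N, ∀ n ≥ N, d (x m) (x n) < ε := by
  have hα0 : (0:ℝ) < α := lt_trans one_pos hα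
  set q : ℝ := α⁻¹ with hq
  have hq0 : 0 < q := inv_pos.mpr hα0
  have hq1 : q < 1 := inv_lt_one_of_one_lt₀ hα
  have hs0 : (0:ℝ) < s := lt_of_lt_of_le one_pos hs
  set M : ℝ := ∑' n, α ^ n * d (x n) (x (n+1)) with hM
  have hM0 : 0 ≤ M := tsum_nonneg (fun n => mul_nonneg (by positivity) (hd_nonneg _ _))
  have hdM : ∀ n, d (x n) (x (n+1)) ≤ M * q ^ n := by
    intro n
    have h1 : α ^ n * d (x n) (x (n+1)) ≤ M :=
      Summable.le_tsum hsum n (fun m _ => mul_nonneg (by positivity) (hd_nonneg _ _))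
    have h2 : (α ^ n * d (x n) (x (n+1))) * q ^ n ≤ M * q ^ n :=
      mul_le_mul_of_nonneg_right h1 (by positivity)
    have h3 : α ^ n * q ^ n = 1 := by
      rw [hq, inv_pow, mul_inv_cancel₀ (by positivity)]
    calc d (x n) (x (n+1)) = (α ^ n * d (x n) (x (n+1))) * q ^ n := by
          rw [mul_comm (α ^ n) _, mul_assoc, h3, mul_one]
      _ ≤ M * q ^ n := h2
  -- choose B with s < α ^ B
  obtain ⟨B, hB⟩ := pow_unbounded_of_one_lt s hα
  have hB1 : 1 ≤ B := by
    rcases Nat.eq_zero_or_pos B with h | h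
    · rw [h, pow_zero] at hB; linarith
    · exact h
  have hqB : s * q ^ B < 1 := by
    have h : s * q ^ B = s / α ^ B := by rw [hq, inv_pow, div_eq_mul_inv]
    rw [h, div_lt_one (by positivity)]
    exact hB
  have hden : 0 < 1 - s * q ^ B := by linarith
  -- chain inequality
  have chain : ∀ k n, d (x n) (x (n + k)) ≤
      ∑ j ∈ Finset.range k, s ^ (j+1) * d (x (n+j)) (x (n+j+1)) := by
    intro k
    induction k with
    | zero => intro n; simp [(hd_eq (x n) (x n)).mpr rfl]
    | succ k ih =>
      intro n
      have h1 : d (x n) (x (n + (k+1))) ≤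
          s * (d (x n) (x (n+1)) + d (x (n+1)) (x (n+1+k))) := by
        have h := hd_tri (x n) (x (n + (k+1))) (x (n+1))
        have e : n + (k+1) = n + 1 + k := by omega
        rw [e]; rw [e] at h; exact h
      calc d (x n) (x (n + (k+1)))
          ≤ s * (d (x n) (x (n+1)) + d (x (n+1)) (x (n+1+k))) := h1
        _ ≤ s * (d (x n) (x (n+1)) +
              ∑ j ∈ Finset.range k, s ^ (j+1) * d (x (n+1+j)) (x (n+1+j+1))) := by
            exact mul_le_mul_of_nonneg_left (by linarith [ih (n+1)]) hs0.le
        _ = s * d (x n) (x (n+1)) +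
              ∑ j ∈ Finset.range k, s ^ (j+1+1) * d (x (n+(j+1))) (x (n+(j+1)+1)) := by
            rw [mul_add, Finset.mul_sum]
            congr 1
            apply Finset.sum_congr rfl
            intro j _
            have e1 : n + 1 + j = n + (j+1) := by omega
            rw [e1]; ring
        _ = ∑ j ∈ Finset.range (k+1), s ^ (j+1) * d (x (n+j)) (x (n+j+1)) := by
            rw [Finset.sum_range_succ']
            rw [add_comm]
            norm_num
  -- block bound
  set K : ℝ := s ^ (B+1) * M * B with hK
  have hK0 : 0 ≤ K := by positivity
  have block : ∀ n k, k ≤ B → d (x n) (x (n + k)) ≤ K * q ^ n := by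
    intro n k hkB
    calc d (x n) (x (n + k))
        ≤ ∑ j ∈ Finset.range k, s ^ (j+1) * d (x (n+j)) (x (n+j+1)) := chain k n
      _ ≤ ∑ j ∈ Finset.range k, s ^ (B+1) * M * q ^ n := by
          apply Finset.sum_le_sum
          intro j hj
          have hjk : j < k := Finset.mem_range.mp hj
          have h0 := hd_nonneg (x (n+j)) (x (n+j+1))
          have hsj : s ^ (j+1) ≤ s ^ (B+1) :=
            pow_le_pow_right₀ (by linarith) (by omega)
          have hdj := hdM (n+j)
          have hqj : q ^ (n+j) ≤ q ^ n := pow_le_pow_of_le_one hq0.le hq1.le (by omega)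
          calc s ^ (j+1) * d (x (n+j)) (x (n+j+1))
              ≤ s ^ (B+1) * d (x (n+j)) (x (n+j+1)) := mul_le_mul_of_nonneg_right hsj h0
            _ ≤ s ^ (B+1) * (M * q ^ (n+j)) :=
                mul_le_mul_of_nonneg_left hdj (by positivity)
            _ ≤ s ^ (B+1) * (M * q ^ n) :=
                mul_le_mul_of_nonneg_left (mul_le_mul_of_nonneg_left hqj hM0) (by positivity)
            _ = s ^ (B+1) * M * q ^ n := by ring
      _ = (k : ℝ) * (s ^ (B+1) * M * q ^ n) := by
          rw [Finset.sum_const, Finset.card_range, nsmul_eq_mul]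
      _ ≤ (B : ℝ) * (s ^ (B+1) * M * q ^ n) :=
          mul_le_mul_of_nonneg_right (Nat.cast_le.mpr hkB) (by positivity)
      _ = K * q ^ n := by rw [hK]; ring
  -- main estimate by strong induction
  set C : ℝ := s * K / (1 - s * q ^ B) with hC
  have hC0 : 0 ≤ C := div_nonneg (mul_nonneg hs0.le hK0) hden.le
  have hKC : K ≤ C := by
    rw [hC, le_div_iff₀ hden]
    nlinarith [mul_nonneg hK0 (mul_nonneg hs0.le (pow_nonneg hq0.le B)),
      mul_nonneg (by linarith : (0:ℝ) ≤ s - 1) hK0]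
  have hCeq : C * (1 - s * q ^ B) = s * K := by
    rw [hC, div_mul_cancel₀ _ hden.ne']
  have main : ∀ k n, d (x n) (x (n + k)) ≤ C * q ^ n := by
    intro k
    induction k using Nat.strong_induction_on with
    | _ k ih =>
      intro n
      rcases le_or_gt k B with h | h
      · exact (block n k h).trans (mul_le_mul_of_nonneg_right hKC (by positivity))
      · set t := k - B with ht
        have hkt : k = B + t := by omega
        have htk : t < k := by omega
        have h1 : d (x n) (x (n + k)) ≤
            s * (d (x n) (x (n + B)) + d (x (n + B)) (x (n + B + t))) := by
          have h := hd_tri (x n) (x (n + k)) (x (n + B))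
          have e : n + k = n + B + t := by omega
          rw [e]; rw [e] at h; exact h
        have h2 : d (x n) (x (n + B)) ≤ K * q ^ n := block n B le_rfl
        have h3 : d (x (n + B)) (x (n + B + t)) ≤ C * q ^ (n + B) := ih t htk (n + B)
        have h4 : q ^ (n + B) = q ^ n * q ^ B := pow_add q n B
        have hqn : (0:ℝ) < q ^ n := pow_pos hq0 n
        calc d (x n) (x (n + k))
            ≤ s * (K * q ^ n + C * q ^ (n + B)) :=
              h1.trans (mul_le_mul_of_nonneg_left (add_le_add h2 h3) hs0.le)
          _ = (s * K + C * (s * q ^ B)) * q ^ n := by rw [h4]; ring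
          _ = C * q ^ n := by
              rw [show s * K + C * (s * q ^ B) = C from by linear_combination -hCeq]
  -- conclude Cauchy
  intro ε hε
  have hεC : 0 < ε / (C + 1) := by positivity
  obtain ⟨N, hN⟩ := exists_pow_lt_of_lt_one hεC hq1
  refine ⟨N, ?_⟩
  have key : ∀ m n : ℕ, N ≤ m → m < n → d (x m) (x n) < ε := by
    intro m n hm hmn
    have e : n = m + (n - m) := by omega
    have h1 : d (x m) (x n) ≤ C * q ^ m := by rw [e]; exact main (n - m) m
    have h2 : q ^ m ≤ q ^ N := pow_le_pow_of_le_one hq0.le hq1.le hm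
    calc d (x m) (x n) ≤ C * q ^ m := h1
      _ ≤ (C + 1) * q ^ N := by nlinarith [pow_pos hq0 m, pow_pos hq0 N]
      _ < (C + 1) * (ε / (C + 1)) := by
          have : (0:ℝ) < C + 1 := by linarith
          exact mul_lt_mul_of_pos_left hN this
      _ = ε := by field_simp
  intro m hm n hn
  rcases lt_trichotomy m n with h | h | h
  · exact key m n hm h
  · rw [h, (hd_eq (x n) (x n)).mpr rfl]; exact hε
  · rw [hd_symm]; exact key n m hn h
end

section
/- Let (X,d) be a complete b-metric space, φ : X → [0,∞), f : X → X continuous, and α > 1 such that d(x, f(x)) ≤ φ(x) − α·φ(f(x)) for every x ∈ X. Then for every x₀ ∈ X, the sequence of iterates (f^n(x₀)) converges and its limit is a fixed point of f. -/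
set_option maxHeartbeats 1000000 in
theorem bmetric_caristi_kirk_type
    (X : Type*) (d : X → X → ℝ) (s : ℝ) (hs : 1 ≤ s)
    (hd_nonneg : ∀ x y, 0 ≤ d x y)
    (hd_eq : ∀ x y, d x y = 0 ↔ x = y)
    (hd_symm : ∀ x y, d x y = d y x)
    (hd_tri : ∀ x y z, d x y ≤ s * (d x z + d z y))
    (hcomplete : ∀ x : ℕ → X,
      (∀ ε > 0, ∃ N : ℕ, ∀ m ≥ N, ∀ n ≥ N, d (x m) (x n) < ε) →
      ∃ l : X, Filter.Tendsto (fun n => d (x n) l) Filter.atTop (nhds 0))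
    (φ : X → ℝ) (hφ : ∀ x, 0 ≤ φ x)
    (f : X → X)
    (hf_cont : ∀ (x : ℕ → X) (l : X),
      Filter.Tendsto (fun n => d (x n) l) Filter.atTop (nhds 0) →
      Filter.Tendsto (fun n => d (f (x n)) (f l)) Filter.atTop (nhds 0))
    (α : ℝ) (hα : 1 < α)
    (hb : ∀ x, d x (f x) ≤ φ x - α * φ (f x)) :
    ∀ x₀ : X, ∃ u : X,
      Filter.Tendsto (fun n => d (f^[n] x₀) u) Filter.atTop (nhds 0) ∧ f u = u := by
  intro x₀
  set x : ℕ → X := fun n => f^[n] x₀ with hx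
  have hs0 : (0:ℝ) < s := lt_of_lt_of_le one_pos hs
  set γ : ℝ := α⁻¹ with hγ
  have hγ0 : 0 < γ := inv_pos.mpr (lt_trans one_pos hα)
  have hγ1 : γ < 1 := inv_lt_one_of_one_lt₀ hα
  have hxsucc : ∀ k, x (k+1) = f (x k) := by
    intro k; simp [hx, Function.iterate_succ_apply']
  set C : ℝ := φ x₀ with hC
  have hC0 : 0 ≤ C := hφ x₀
  -- φ decays geometrically
  have hφdec : ∀ k, φ (x (k+1)) ≤ γ * φ (x k) := by
    intro k
    have h1 := hb (x k)
    have h2 := hd_nonneg (x k) (f (x k))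
    rw [hxsucc]
    have hα0 : (0:ℝ) < α := lt_trans one_pos hα
    rw [hγ, inv_mul_eq_div, le_div_iff₀ hα0]
    nlinarith
  have hφpow : ∀ k, φ (x k) ≤ C * γ ^ k := by
    intro k
    induction k with
    | zero => simp [hx, hC]
    | succ n ih =>
      calc φ (x (n+1)) ≤ γ * φ (x n) := hφdec n
        _ ≤ γ * (C * γ ^ n) := by nlinarith
        _ = C * γ ^ (n+1) := by ring
  -- edge bound
  have hedge : ∀ k, d (x k) (x (k+1)) ≤ C * γ ^ k := by
    intro k
    have h1 := hb (x k)
    have h2 := hφ (f (x k))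
    have h3 := hφpow k
    rw [hxsucc]
    nlinarith [hd_nonneg (x k) (f (x k))]
  have hγpow_le_one : ∀ k : ℕ, γ ^ k ≤ 1 := fun k =>
    pow_le_one₀ hγ0.le hγ1.le
  -- chain bound
  have hchain : ∀ a k : ℕ, d (x a) (x (a+k)) ≤ s ^ k * (k * (C * γ ^ a)) := by
    intro a k
    induction k generalizing a with
    | zero =>
      simp [(hd_eq (x a) (x a)).mpr rfl]
    | succ n ih =>
      have h1 := hd_tri (x a) (x (a+(n+1))) (x (a+1))
      have h2 := ih (a+1)
      have h3 := hedge a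
      have h4 : x (a+1+n) = x (a+(n+1)) := by ring_nf
      rw [h4] at h2
      have hγa : (0:ℝ) ≤ γ ^ a := le_of_lt (pow_pos hγ0 a)
      have hsn : (1:ℝ) ≤ s ^ n := one_le_pow₀ hs
      have hgs : γ ^ (a+1) ≤ γ ^ a := by
        rw [pow_succ]; nlinarith
      have h5 : d (x (a+1)) (x (a+(n+1))) ≤ s ^ n * (n * (C * γ ^ a)) := by
        refine h2.trans ?_
        have hn0 : (0:ℝ) ≤ (n:ℝ) := Nat.cast_nonneg n
        have := mul_le_mul_of_nonneg_left hgs hC0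
        nlinarith [mul_nonneg (le_trans zero_le_one hsn) hn0]
      have hsn1 : s ^ (n+1) = s * s ^ n := by rw [pow_succ]; ring
      calc d (x a) (x (a+(n+1)))
          ≤ s * (d (x a) (x (a+1)) + d (x (a+1)) (x (a+(n+1)))) := h1
        _ ≤ s * (C * γ ^ a + s ^ n * (n * (C * γ ^ a))) := by nlinarith
        _ ≤ s ^ (n+1) * (((n:ℝ)+1) * (C * γ ^ a)) := by
            rw [hsn1]
            nlinarith [mul_nonneg (mul_nonneg hs0.le (mul_nonneg hC0 hγa))
              (sub_nonneg.mpr hsn), (Nat.cast_nonneg n : (0:ℝ) ≤ (n:ℝ)), mul_nonneg hC0 hγa]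
        _ = s ^ (n+1) * ((↑(n+1) : ℝ) * (C * γ ^ a)) := by push_cast; ring
  -- pick block size t with s * γ^t < 1
  obtain ⟨t₀, ht₀⟩ : ∃ n : ℕ, γ ^ n < s⁻¹ := by
    rcases exists_pow_lt_of_lt_one (inv_pos.mpr hs0) hγ1 with ⟨n, hn⟩
    exact ⟨n, hn⟩
  set t : ℕ := t₀ + 1 with ht
  have htpos : 1 ≤ t := Nat.le_add_left 1 t₀
  have hγt : s * γ ^ t < 1 := by
    have h1 : γ ^ t ≤ γ ^ t₀ := by
      rw [ht, pow_succ]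
      nlinarith [pow_pos hγ0 t₀]
    have : γ ^ t < s⁻¹ := lt_of_le_of_lt h1 ht₀
    calc s * γ ^ t < s * s⁻¹ := by nlinarith [pow_pos hγ0 t]
      _ = 1 := mul_inv_cancel₀ (ne_of_gt hs0)
  set K : ℝ := s ^ t * (t * C) with hK
  have hK0 : 0 ≤ K := by positivity
  set M : ℝ := max K (s * K / (1 - s * γ ^ t)) with hM
  have hM0 : 0 ≤ M := le_trans hK0 (le_max_left _ _)
  have hMK : K ≤ M := le_max_left _ _
  have hM2 : s * K + s * γ ^ t * M ≤ M := by
    have hden : 0 < 1 - s * γ ^ t := by linarith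
    have h1 : s * K / (1 - s * γ ^ t) ≤ M := le_max_right _ _
    rw [div_le_iff₀ hden] at h1
    nlinarith [pow_pos hγ0 t]
  -- main bound: d (x m) (x n) ≤ M * γ^m for m ≤ n
  have hmain : ∀ j m n : ℕ, m ≤ n → n ≤ m + j → d (x m) (x n) ≤ M * γ ^ m := by
    intro j
    induction j with
    | zero =>
      intro m n h1 h2
      have : n = m := le_antisymm (by omega) h1
      subst this
      simp [(hd_eq (x n) (x n)).mpr rfl]
      positivity
    | succ j ih =>
      intro m n h1 h2
      have hγm : (0:ℝ) < γ ^ m := pow_pos hγ0 m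
      by_cases hcase : n ≤ m + t
      · -- short range: chain bound
        have hk : n = m + (n - m) := by omega
        have hc := hchain m (n - m)
        rw [← hk] at hc
        refine hc.trans ?_
        have hnm : n - m ≤ t := by omega
        have h3 : ((n - m : ℕ) : ℝ) ≤ (t : ℝ) := Nat.cast_le.mpr hnm
        have h4 : s ^ (n - m) ≤ s ^ t := pow_le_pow_right₀ hs hnm
        have h5 : (0:ℝ) ≤ ((n-m:ℕ):ℝ) := Nat.cast_nonneg _
        have hCγ : (0:ℝ) ≤ C * γ ^ m := mul_nonneg hC0 hγm.le
        have h7 : s ^ (n-m) * (((n-m:ℕ):ℝ) * (C * γ ^ m)) ≤ s ^ t * ((t:ℝ) * (C * γ ^ m)) := by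
          apply mul_le_mul h4 (mul_le_mul_of_nonneg_right h3 hCγ)
            (mul_nonneg h5 hCγ) (pow_nonneg hs0.le t)
        refine h7.trans ?_
        have he : s ^ t * ((t:ℝ) * (C * γ ^ m)) = K * γ ^ m := by rw [hK]; ring
        rw [he]
        exact mul_le_mul_of_nonneg_right hMK hγm.le
      · -- long range: split at m + t
        push_neg at hcase
        have h3 := hd_tri (x m) (x n) (x (m + t))
        have h4 := hchain m t
        have h5 : d (x (m+t)) (x n) ≤ M * γ ^ (m+t) := by
          apply ih (m+t) n (by omega) (by omega)
        have h6 : s ^ t * (t * (C * γ ^ m)) = K * γ ^ m := by rw [hK]; ring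
        rw [h6] at h4
        have h7 : γ ^ (m+t) = γ ^ m * γ ^ t := pow_add γ m t
        calc d (x m) (x n) ≤ s * (d (x m) (x (m+t)) + d (x (m+t)) (x n)) := h3
          _ ≤ s * (K * γ ^ m + M * (γ ^ m * γ ^ t)) := by rw [← h7]; nlinarith
          _ = (s * K + s * γ ^ t * M) * γ ^ m := by ring
          _ ≤ M * γ ^ m := by nlinarith
  -- Cauchy
  have hcauchy : ∀ ε > 0, ∃ N : ℕ, ∀ m ≥ N, ∀ n ≥ N, d (x m) (x n) < ε := by
    intro ε hε
    have htend : Filter.Tendsto (fun n : ℕ => M * γ ^ n) Filter.atTop (nhds 0) := by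
      have := tendsto_pow_atTop_nhds_zero_of_lt_one hγ0.le hγ1
      simpa using this.const_mul M
    obtain ⟨N, hN⟩ := (htend.eventually (gt_mem_nhds hε)).exists_forall_of_atTop
    refine ⟨N, fun m hm n hn => ?_⟩
    have key : ∀ a b : ℕ, N ≤ a → a ≤ b → d (x a) (x b) < ε := by
      intro a b ha hab
      have h1 : d (x a) (x b) ≤ M * γ ^ a := hmain b a b hab (by omega)
      have h2 : γ ^ a ≤ γ ^ N := pow_le_pow_of_le_one hγ0.le hγ1.le ha
      have := hN a ha
      nlinarith
    rcases le_total m n with h | h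
    · exact key m n hm h
    · rw [hd_symm]; exact key n m hn h
  obtain ⟨u, hu⟩ := hcomplete x hcauchy
  refine ⟨u, hu, ?_⟩
  -- fixed point
  have h1 : Filter.Tendsto (fun n => d (f (x n)) (f u)) Filter.atTop (nhds 0) :=
    hf_cont x u hu
  have h2 : Filter.Tendsto (fun n => d (x (n+1)) u) Filter.atTop (nhds 0) :=
    hu.comp (Filter.tendsto_add_atTop_nat 1)
  have h3 : Filter.Tendsto (fun n => s * (d (f u) (x (n+1)) + d (x (n+1)) u))
      Filter.atTop (nhds 0) := by
    have h1' : Filter.Tendsto (fun n => d (f u) (x (n+1))) Filter.atTop (nhds 0) := by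
      have : (fun n => d (f u) (x (n+1))) = fun n => d (f (x n)) (f u) := by
        funext n; rw [hxsucc, hd_symm]
      rw [this]; exact h1
    have := (h1'.add h2).const_mul s
    simpa using this
  have h4 : d (f u) u ≤ 0 := by
    apply le_of_tendsto_of_tendsto' tendsto_const_nhds h3
    intro n
    exact hd_tri (f u) u (x (n+1))
  exact (hd_eq (f u) u).mp (le_antisymm h4 (hd_nonneg _ _))
end

section
/- Let α > 1 and let φ : [0,∞) → [0,∞) be a comparison function for which there exist a > 0 and ε > 0 with φ(x) ≤ x − a·x^α for all x ∈ [0, ε]. Then for every r ≥ 0, limsup_{n→∞} φ^[n](r) · n^{1/(α−1)} is finite. -/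
/-!
Near `0` the map `φ` is dominated by the Euler step `x ↦ x - a x^α` of the equation
`x' = -a x^α`, whose solution `C t^(-1/(α-1))` decreases by at least one such step per unit of
time, because `t ↦ t^(-β)` lies above its tangents. Once the orbit of `r` has entered `[0, ε]`
below that solution, monotonicity of `φ` keeps it below the solution forever, so
`φ^[n] r = O(n^(-1/(α-1)))`.
-/

open Filter Topology

namespace Real

theorem one_sub_mul_le_one_add_rpow_neg {p s : ℝ} (hp : 0 ≤ p) (hs : -1 < s) :
    1 - p * s ≤ (1 + s) ^ (-p) := by
  have hs' : 0 < 1 + s := by linarith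
  have hlog : log (1 + s) ≤ s := by linarith [log_le_sub_one_of_pos hs']
  calc 1 - p * s ≤ log (1 + s) * -p + 1 := by nlinarith
    _ ≤ exp (log (1 + s) * -p) := add_one_le_exp _
    _ = (1 + s) ^ (-p) := (rpow_def_of_pos hs' _).symm

theorem rpow_neg_sub_mul_div_le_add_one_rpow_neg {p t : ℝ} (hp : 0 ≤ p) (ht : 0 < t) :
    t ^ (-p) - p * t ^ (-p) / t ≤ (t + 1) ^ (-p) := by
  have hsplit : (t + 1) ^ (-p) = t ^ (-p) * (1 + t⁻¹) ^ (-p) := by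
    rw [← mul_rpow ht.le (by positivity), mul_add, mul_one, mul_inv_cancel₀ ht.ne']
  have hbern := one_sub_mul_le_one_add_rpow_neg hp (by linarith [inv_pos.2 ht] : -1 < t⁻¹)
  calc t ^ (-p) - p * t ^ (-p) / t = t ^ (-p) * (1 - p * t⁻¹) := by ring
    _ ≤ t ^ (-p) * (1 + t⁻¹) ^ (-p) := by gcongr
    _ = (t + 1) ^ (-p) := hsplit.symm

end Real

open Real

/-- With `β = 1/(α-1)`, `t ↦ (β/a)^β t^(-β)` solves `x' = -a x^α`. -/
noncomputable def decayProfile (a β t : ℝ) : ℝ := (β / a) ^ β * t ^ (-β)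

section decayProfile

variable {a β : ℝ}

theorem decayProfile_pos (ha : 0 < a) (hβ : 0 < β) {t : ℝ} (ht : 0 < t) :
    0 < decayProfile a β t := by
  unfold decayProfile; positivity

theorem decayProfile_anti (ha : 0 < a) (hβ : 0 < β) {s t : ℝ} (hs : 0 < s) (hst : s ≤ t) :
    decayProfile a β t ≤ decayProfile a β s := by
  unfold decayProfile
  exact mul_le_mul_of_nonneg_left (rpow_le_rpow_of_nonpos hs hst (by linarith)) (by positivity)

theorem tendsto_decayProfile_atTop (hβ : 0 < β) :
    Tendsto (decayProfile a β) atTop (𝓝 0) := by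
  show Tendsto (fun t => (β / a) ^ β * t ^ (-β)) atTop (𝓝 0)
  simpa using (tendsto_rpow_neg_atTop hβ).const_mul ((β / a) ^ β)

theorem mul_decayProfile_rpow {α : ℝ} (ha : 0 < a) (hβ : 0 < β) (hαβ : (α - 1) * β = 1)
    {t : ℝ} (ht : 0 < t) :
    a * decayProfile a β t ^ α = β * decayProfile a β t / t := by
  have hC : 0 < β / a := by positivity
  have hβα : β * (α - 1) = 1 := by rw [mul_comm, hαβ]
  have hpow : decayProfile a β t ^ (α - 1) = β / a / t := by
    rw [decayProfile, mul_rpow (by positivity) (by positivity), ← rpow_mul hC.le,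
      ← rpow_mul ht.le, neg_mul, hβα, rpow_one, rpow_neg_one, ← div_eq_mul_inv]
  have hsplit : decayProfile a β t ^ α = decayProfile a β t ^ (α - 1) * decayProfile a β t := by
    rw [← rpow_add_one (decayProfile_pos ha hβ ht).ne', sub_add_cancel]
  rw [hsplit, hpow]
  field_simp

theorem decayProfile_sub_le_decayProfile_add_one {α : ℝ} (ha : 0 < a) (hβ : 0 < β)
    (hαβ : (α - 1) * β = 1) {t : ℝ} (ht : 0 < t) :
    decayProfile a β t - a * decayProfile a β t ^ α ≤ decayProfile a β (t + 1) := by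
  rw [mul_decayProfile_rpow ha hβ hαβ ht]
  unfold decayProfile
  calc (β / a) ^ β * t ^ (-β) - β * ((β / a) ^ β * t ^ (-β)) / t
      = (β / a) ^ β * (t ^ (-β) - β * t ^ (-β) / t) := by ring
    _ ≤ (β / a) ^ β * (t + 1) ^ (-β) := by
      gcongr
      exact rpow_neg_sub_mul_div_le_add_one_rpow_neg hβ.le ht

end decayProfile

theorem iterate_le_of_map_le {α : Type*} [Preorder α] {φ : α → α} {s : Set α} {x : α}
    {v : ℕ → α} (hφs : Set.MapsTo φ s s) (hφ_mono : ∀ x ∈ s, ∀ y, x ≤ y → φ x ≤ φ y)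
    (hx : x ∈ s) (h₀ : x ≤ v 0) (hv : ∀ k, φ (v k) ≤ v (k + 1)) (n : ℕ) :
    φ^[n] x ≤ v n := by
  induction n with
  | zero => exact h₀
  | succ n ih =>
    rw [Function.iterate_succ_apply']
    exact (hφ_mono _ (hφs.iterate n hx) _ ih).trans (hv n)

theorem isBoundedUnder_mul_rpow_of_le_shift {f : ℕ → ℝ} {C β : ℝ} {N m : ℕ} (hC : 0 ≤ C)
    (hβ : 0 ≤ β) (hm : 1 ≤ m) (hf : ∀ k : ℕ, f (k + N) ≤ C * ((m : ℝ) + k) ^ (-β)) :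
    IsBoundedUnder (· ≤ ·) atTop (fun n : ℕ => f n * (n : ℝ) ^ β) := by
  refine isBoundedUnder_of_eventually_le (a := C * ((N : ℝ) + m) ^ β) ?_
  filter_upwards [eventually_ge_atTop N] with n hn
  obtain ⟨k, rfl⟩ := Nat.exists_eq_add_of_le' hn
  have hmk : (0 : ℝ) < m + k := by positivity
  have hn_le : ((k + N : ℕ) : ℝ) ≤ ((N : ℝ) + m) * (m + k) := by
    have : (1 : ℝ) ≤ m := by exact_mod_cast hm
    push_cast; nlinarith [(N.cast_nonneg : (0 : ℝ) ≤ N), (k.cast_nonneg : (0 : ℝ) ≤ k)]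
  calc f (k + N) * ((k + N : ℕ) : ℝ) ^ β
      ≤ C * ((m : ℝ) + k) ^ (-β) * (((N : ℝ) + m) * (m + k)) ^ β := by
        gcongr
        exact hf k
    _ = C * ((N : ℝ) + m) ^ β := by
        rw [mul_rpow (by positivity) hmk.le, rpow_neg hmk.le]
        field_simp

theorem limsup_finite_of_comparison_Gamma_alpha
    (α : ℝ) (hα : 1 < α)
    (φ : ℝ → ℝ)
    (hφ_nonneg : ∀ r, 0 ≤ r → 0 ≤ φ r)
    (hφ_mono : ∀ x y, 0 ≤ x → x ≤ y → φ x ≤ φ y)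
    (hφ_iter : ∀ r, 0 ≤ r → Filter.Tendsto (fun n => φ^[n] r) Filter.atTop (nhds 0))
    (a ε : ℝ) (ha : 0 < a) (hε : 0 < ε)
    (hφ_le : ∀ x ∈ Set.Icc (0 : ℝ) ε, φ x ≤ x - a * x ^ α) :
    ∀ r : ℝ, 0 ≤ r →
      Filter.IsBoundedUnder (· ≤ ·) Filter.atTop
        (fun n : ℕ => φ^[n] r * (n : ℝ) ^ (1 / (α - 1))) := by
  intro r hr
  set β := 1 / (α - 1)
  have hβ : 0 < β := one_div_pos.2 (sub_pos.2 hα)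
  have hαβ : (α - 1) * β = 1 := mul_one_div_cancel (sub_pos.2 hα).ne'
  obtain ⟨m, hmε, hm⟩ : ∃ m : ℕ, decayProfile a β m ≤ ε ∧ 1 ≤ m :=
    ((((tendsto_decayProfile_atTop hβ).comp tendsto_natCast_atTop_atTop).eventually
      (eventually_le_nhds hε)).and (eventually_ge_atTop 1)).exists
  have hm_pos : (0 : ℝ) < m := by exact_mod_cast hm
  set v : ℕ → ℝ := fun k => decayProfile a β (m + k)
  obtain ⟨N, hN⟩ : ∃ N, φ^[N] r ≤ v 0 := by
    simpa [v] using
      ((hφ_iter r hr).eventually (eventually_le_nhds (decayProfile_pos ha hβ hm_pos))).exists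
  have hv (k : ℕ) : φ (v k) ≤ v (k + 1) := by
    have hpos : (0 : ℝ) < m + k := by positivity
    calc φ (v k) ≤ v k - a * v k ^ α :=
          hφ_le _ ⟨(decayProfile_pos ha hβ hpos).le,
            (decayProfile_anti ha hβ hm_pos (by simp)).trans hmε⟩
      _ ≤ decayProfile a β (m + k + 1) := decayProfile_sub_le_decayProfile_add_one ha hβ hαβ hpos
      _ = v (k + 1) := by simp only [v]; push_cast; ring_nf
  have hφs : Set.MapsTo φ (Set.Ici 0) (Set.Ici 0) := fun x hx => hφ_nonneg x hx
  refine isBoundedUnder_mul_rpow_of_le_shift (N := N) (C := (β / a) ^ β) (by positivity) hβ.le hm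
    fun k => ?_
  rw [Function.iterate_add_apply]
  exact iterate_le_of_map_le hφs (fun x hx y hxy => hφ_mono x y hx hxy) (hφs.iterate N hr) hN hv k
end

section
/- Let α ∈ (1,2) and γ ∈ (0, (2−α)/(α−1)). If φ is a comparison function for which there exist a > 0 and ε > 0 with φ(x) ≤ x − a·x^α for all x ∈ [0, ε], then the series Σ_{n≥1} n^γ · φ^[n](r) converges for every r ≥ 0. -/
/-!
Near `0` the map `φ` lies below `x ↦ x - a x ^ α`, the explicit Euler step of `y' = -a y ^ α`.
The solution `y(t) = (a (α - 1) t) ^ (-1/(α-1))` of that equation is convex, so it is also a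
supersolution of the difference inequality `y(t + 1) ≥ y(t) - a y(t) ^ α`. Once an iterate of
`φ` has fallen below `y(c)`, monotonicity of `φ` keeps the later iterates below `y(c + k)`;
hence `φ^[n] r = O(n ^ (-1/(α-1)))`, and `n ^ γ φ^[n] r` is summable when
`γ - 1/(α-1) < -1`.
-/

open Real Filter Set Topology

lemma rpow_neg_sub_rpow_neg_add_one_le {β x : ℝ} (hβ : 0 ≤ β) (hx : 0 < x) :
    x ^ (-β) - (x + 1) ^ (-β) ≤ β * x ^ (-β) / x := by
  have hx1 : 0 < 1 + x⁻¹ := by positivity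
  have hlog : log (1 + x⁻¹) ≤ x⁻¹ := by simpa using log_le_sub_one_of_pos hx1
  have hratio : 1 - β * x⁻¹ ≤ (1 + x⁻¹) ^ (-β) := by
    rw [rpow_def_of_pos hx1]
    nlinarith [add_one_le_exp (log (1 + x⁻¹) * -β)]
  have hsplit : (x + 1) ^ (-β) = x ^ (-β) * (1 + x⁻¹) ^ (-β) := by
    rw [← mul_rpow hx.le hx1.le, mul_add, mul_inv_cancel₀ hx.ne', mul_one]
  have hxβ : 0 < x ^ (-β) := rpow_pos_of_pos hx _
  rw [hsplit, div_eq_mul_inv]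
  nlinarith [mul_le_mul_of_nonneg_left hratio hxβ.le]

noncomputable def barrier (a α t : ℝ) : ℝ := (a * (α - 1) * t) ^ (-(α - 1)⁻¹)

section barrier

variable {a α : ℝ} (ha : 0 < a) (hα : 1 < α)
include ha hα

lemma barrier_pos {t : ℝ} (ht : 0 < t) : 0 < barrier a α t :=
  rpow_pos_of_pos (by have := sub_pos.2 hα; positivity) _

lemma barrier_le_barrier {s t : ℝ} (hs : 0 < s) (hst : s ≤ t) : barrier a α t ≤ barrier a α s := by
  have hb : 0 < a * (α - 1) := mul_pos ha (sub_pos.2 hα)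
  exact rpow_le_rpow_of_nonpos (by positivity) (by gcongr)
    (neg_nonpos.2 (inv_nonneg.2 (sub_pos.2 hα).le))

lemma barrier_eq_mul_rpow {t : ℝ} (ht : 0 ≤ t) :
    barrier a α t = (a * (α - 1)) ^ (-(α - 1)⁻¹) * t ^ (-(α - 1)⁻¹) :=
  mul_rpow (mul_pos ha (sub_pos.2 hα)).le ht

lemma tendsto_barrier_atTop : Tendsto (barrier a α) atTop (𝓝 0) :=
  (tendsto_rpow_neg_atTop (inv_pos.2 (sub_pos.2 hα))).comp
    (tendsto_id.const_mul_atTop (mul_pos ha (sub_pos.2 hα)))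

lemma mul_barrier_rpow {t : ℝ} (ht : 0 < t) :
    a * barrier a α t ^ α = (α - 1)⁻¹ * barrier a α t / t := by
  have hα1 : 0 < α - 1 := sub_pos.2 hα
  have hbt : 0 < a * (α - 1) * t := by positivity
  have hexp : -(α - 1)⁻¹ * α = -(α - 1)⁻¹ + -1 := by field_simp; ring
  rw [barrier, ← rpow_mul hbt.le, hexp, rpow_add hbt, rpow_neg_one]
  field_simp

lemma barrier_sub_le {t : ℝ} (ht : 0 < t) :
    barrier a α t - a * barrier a α t ^ α ≤ barrier a α (t + 1) := by
  have hb : 0 < (a * (α - 1)) ^ (-(α - 1)⁻¹) := rpow_pos_of_pos (mul_pos ha (sub_pos.2 hα)) _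
  have key := rpow_neg_sub_rpow_neg_add_one_le (inv_nonneg.2 (sub_pos.2 hα).le) ht
  rw [mul_barrier_rpow ha hα ht, barrier_eq_mul_rpow ha hα ht.le,
    barrier_eq_mul_rpow ha hα (by positivity)]
  calc _ = (a * (α - 1)) ^ (-(α - 1)⁻¹) *
        (t ^ (-(α - 1)⁻¹) - (α - 1)⁻¹ * t ^ (-(α - 1)⁻¹) / t) := by ring
    _ ≤ _ := mul_le_mul_of_nonneg_left (by linarith) hb.le

lemma map_barrier_le {φ : ℝ → ℝ} {ε t : ℝ} (hφ : ∀ x ∈ Icc 0 ε, φ x ≤ x - a * x ^ α)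
    (ht : 0 < t) (htε : barrier a α t ≤ ε) : φ (barrier a α t) ≤ barrier a α (t + 1) :=
  (hφ _ ⟨(barrier_pos ha hα ht).le, htε⟩).trans (barrier_sub_le ha hα ht)

end barrier

lemma MonotoneOn.iterate_le_seq {β : Type*} [Preorder β] {f : β → β} {s : Set β}
    (hmono : MonotoneOn f s) (hmaps : MapsTo f s s) {v : ℕ → β} (hvs : ∀ k, v k ∈ s)
    (hv : ∀ k, f (v k) ≤ v (k + 1)) {x : β} (hx : x ∈ s) (hxv : x ≤ v 0) :
    ∀ k, f^[k] x ≤ v k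
  | 0 => hxv
  | k + 1 => by
    rw [Function.iterate_succ_apply']
    exact (hmono (hmaps.iterate k hx) (hvs k) (hmono.iterate_le_seq hmaps hvs hv hx hxv k)).trans
      (hv k)

lemma summable_rpow_mul_of_le_rpow_neg {u : ℕ → ℝ} {β γ C : ℝ} (n₀ : ℕ) (hγ : 0 ≤ γ)
    (hγβ : γ - β < -1) (hu : ∀ n, 0 ≤ u n) (hbound : ∀ k, u (k + n₀) ≤ C * ((k : ℝ) + 1) ^ (-β)) :
    Summable fun n : ℕ => (n : ℝ) ^ γ * u n := by
  rw [← summable_nat_add_iff n₀]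
  have hmajor : Summable fun k : ℕ => ((n₀ : ℝ) + 1) ^ γ * C * ((k : ℝ) + 1) ^ (γ - β) := by
    refine Summable.mul_left _ ?_
    exact_mod_cast (summable_nat_add_iff 1).2 (summable_nat_rpow.2 hγβ)
  refine hmajor.of_nonneg_of_le (fun k => mul_nonneg (by positivity) (hu _)) fun k => ?_
  have hk : (0 : ℝ) < k + 1 := by positivity
  have hpow : ((k + n₀ : ℕ) : ℝ) ^ γ ≤ ((n₀ : ℝ) + 1) ^ γ * ((k : ℝ) + 1) ^ γ := by
    rw [← mul_rpow (by positivity) hk.le]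
    exact rpow_le_rpow (by positivity) (by push_cast; nlinarith) hγ
  calc ((k + n₀ : ℕ) : ℝ) ^ γ * u (k + n₀)
      ≤ ((n₀ : ℝ) + 1) ^ γ * ((k : ℝ) + 1) ^ γ * (C * ((k : ℝ) + 1) ^ (-β)) :=
        mul_le_mul hpow (hbound k) (hu _) (by positivity)
    _ = ((n₀ : ℝ) + 1) ^ γ * C * ((k : ℝ) + 1) ^ (γ - β) := by
        rw [sub_eq_add_neg, rpow_add hk]; ring

theorem Gamma_alpha_subset_Gamma_gamma
    (α γ : ℝ) (hα : α ∈ Set.Ioo (1 : ℝ) 2) (hγ : γ ∈ Set.Ioo (0 : ℝ) ((2 - α) / (α - 1)))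
    (φ : ℝ → ℝ)
    (hφ_nonneg : ∀ r, 0 ≤ r → 0 ≤ φ r)
    (hφ_mono : ∀ x y, 0 ≤ x → x ≤ y → φ x ≤ φ y)
    (hφ_iter : ∀ r, 0 ≤ r → Filter.Tendsto (fun n => φ^[n] r) Filter.atTop (nhds 0))
    (a ε : ℝ) (ha : 0 < a) (hε : 0 < ε)
    (hφ_le : ∀ x ∈ Set.Icc (0 : ℝ) ε, φ x ≤ x - a * x ^ α) :
    ∀ r : ℝ, 0 ≤ r → Summable (fun n : ℕ => (n : ℝ) ^ γ * φ^[n] r) := by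
  intro r hr
  obtain ⟨hα1, -⟩ := hα
  have hmaps : MapsTo φ (Ici 0) (Ici 0) := hφ_nonneg
  obtain ⟨c, hcε, hc1⟩ : ∃ c, barrier a α c ≤ ε ∧ 1 ≤ c :=
    ((tendsto_barrier_atTop ha hα1).eventually (ge_mem_nhds hε)).and (eventually_ge_atTop 1)
      |>.exists
  obtain ⟨n₀, hn₀⟩ := ((hφ_iter r hr).eventually
    (ge_mem_nhds (barrier_pos ha hα1 (by linarith : (0 : ℝ) < c)))).exists
  have hpos (k : ℕ) : (0 : ℝ) < k + c := by positivity
  have hcomp (k : ℕ) : φ^[k + n₀] r ≤ barrier a α (k + c) := by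
    rw [Function.iterate_add_apply]
    refine MonotoneOn.iterate_le_seq (fun x hx y _ hxy => hφ_mono x y hx hxy) hmaps
      (fun k => (barrier_pos ha hα1 (hpos k)).le) (fun k => ?_) (hmaps.iterate n₀ hr)
      (by simpa using hn₀) k
    rw [Nat.cast_succ, add_right_comm]
    exact map_barrier_le ha hα1 hφ_le (hpos k)
      ((barrier_le_barrier ha hα1 (by linarith) (by simp)).trans hcε)
  have hγβ : γ - (α - 1)⁻¹ < -1 := by
    have : (2 - α) / (α - 1) = (α - 1)⁻¹ - 1 := by field_simp; ring
    linarith [this ▸ hγ.2]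
  refine summable_rpow_mul_of_le_rpow_neg (C := (a * (α - 1)) ^ (-(α - 1)⁻¹)) n₀ hγ.1.le hγβ
    (fun n => hmaps.iterate n hr) fun k => ?_
  calc φ^[k + n₀] r ≤ barrier a α (k + c) := hcomp k
    _ ≤ barrier a α (k + 1) := barrier_le_barrier ha hα1 (by positivity) (by linarith)
    _ = _ := barrier_eq_mul_rpow ha hα1 (by positivity)
end

section
/- Let φ be a comparison function for which there exist a ∈ (0,1) and positive reals b_n such that φ^[n+1](r) ≤ a·φ^[n](r) + b_n for every n ∈ ℕ and every r ≥ 0. If for some γ > 0 the series Σ_{n≥0} n^γ · b_n converges, then the series Σ_{n≥1} n^γ · φ^[n](r) converges for every r ≥ 0. -/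
/-! Put `d n = n ^ γ * φ^[n] r`. Since `(n + 1) ^ γ ≤ c * n ^ γ` for large `n` whenever
`c > 1`, the recursion gives `d (n + 1) ≤ c * a * d n + c * n ^ γ * b n` eventually; choosing
`c * a < 1`, the partial sums `S` of such a perturbed contraction satisfy
`(1 - c * a) * S ≤ d 0 + ∑ c * n ^ γ * b n`, so they stay bounded. -/

open Filter Finset

theorem summable_of_le_mul_add {d e : ℕ → ℝ} {q : ℝ} (hd : ∀ n, 0 ≤ d n)
    (he : ∀ n, 0 ≤ e n) (hq₀ : 0 ≤ q) (hq₁ : q < 1) (he_sum : Summable e)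
    (hrec : ∀ n, d (n + 1) ≤ q * d n + e n) : Summable d := by
  have hS : ∀ M, ∑ n ∈ range (M + 1), d n ≤ (d 0 + ∑' n, e n) / (1 - q) := by
    intro M
    have hshift : ∑ n ∈ range M, d (n + 1) ≤ q * ∑ n ∈ range M, d n + ∑' n, e n :=
      calc ∑ n ∈ range M, d (n + 1)
          ≤ ∑ n ∈ range M, (q * d n + e n) := sum_le_sum fun n _ => hrec n
        _ = q * ∑ n ∈ range M, d n + ∑ n ∈ range M, e n := by rw [sum_add_distrib, mul_sum]
        _ ≤ q * ∑ n ∈ range M, d n + ∑' n, e n := by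
          gcongr; exact he_sum.sum_le_tsum _ fun n _ => he n
    have hmono : q * ∑ n ∈ range M, d n ≤ q * ∑ n ∈ range (M + 1), d n :=
      mul_le_mul_of_nonneg_left (by rw [sum_range_succ]; linarith [hd M]) hq₀
    rw [le_div_iff₀ (by linarith)]
    linarith [sum_range_succ' d M]
  refine summable_of_sum_range_le hd fun M => le_trans ?_ (hS M)
  exact sum_le_sum_of_subset_of_nonneg (range_subset_range.2 M.le_succ) fun n _ _ => hd n

theorem summable_of_eventually_le_mul_add {d e : ℕ → ℝ} {q : ℝ} (hd : ∀ n, 0 ≤ d n)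
    (he : ∀ n, 0 ≤ e n) (hq₀ : 0 ≤ q) (hq₁ : q < 1) (he_sum : Summable e)
    (hrec : ∀ᶠ n in atTop, d (n + 1) ≤ q * d n + e n) : Summable d := by
  obtain ⟨N, hN⟩ := eventually_atTop.1 hrec
  refine (summable_nat_add_iff N).1 <| summable_of_le_mul_add (fun n => hd _) (fun n => he _)
    hq₀ hq₁ ((summable_nat_add_iff N).2 he_sum) fun n => ?_
  simpa only [add_right_comm] using hN (n + N) (Nat.le_add_left N n)

theorem eventually_rpow_add_one_le_mul_rpow (γ : ℝ) {c : ℝ} (hc : 1 < c) :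
    ∀ᶠ n : ℕ in atTop, ((n : ℝ) + 1) ^ γ ≤ c * (n : ℝ) ^ γ := by
  have hlim : Tendsto (fun n : ℕ => ((n : ℝ) / (n + 1)) ^ γ) atTop (nhds 1) := by
    simpa using (tendsto_natCast_div_add_atTop (1 : ℝ)).rpow_const (Or.inl one_ne_zero)
  filter_upwards [hlim.eventually_const_lt (inv_lt_one_of_one_lt₀ hc)] with n hn
  have hpos : 0 < ((n : ℝ) + 1) ^ γ := by positivity
  rw [Real.div_rpow (by positivity) (by positivity), inv_lt_iff_one_lt_mul₀ (by linarith),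
    div_mul_eq_mul_div, one_lt_div hpos] at hn
  linarith

theorem summable_of_linear_recursive_bound_general
    (φ : ℝ → ℝ)
    (hφ_nonneg : ∀ r, 0 ≤ r → 0 ≤ φ r)
    (a : ℝ) (ha : a ∈ Set.Ioo (0 : ℝ) 1)
    (b : ℕ → ℝ) (hb : ∀ n, 0 < b n)
    (hrec : ∀ (n : ℕ) (r : ℝ), 0 ≤ r → φ^[n + 1] r ≤ a * φ^[n] r + b n)
    (γ : ℝ)
    (hsum : Summable (fun n : ℕ => (n : ℝ) ^ γ * b n)) :
    ∀ r : ℝ, 0 ≤ r → Summable (fun n : ℕ => (n : ℝ) ^ γ * φ^[n] r) := by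
  intro r hr
  obtain ⟨ha₀, ha₁⟩ := ha
  have hc : 1 < 2 / (a + 1) := by rw [lt_div_iff₀ (by linarith)]; linarith
  have hca : 2 / (a + 1) * a < 1 := by rw [div_mul_eq_mul_div, div_lt_one (by linarith)]; linarith
  have hφn : ∀ n, 0 ≤ φ^[n] r := Function.Iterate.rec _ hr hφ_nonneg
  refine summable_of_eventually_le_mul_add (fun n => mul_nonneg (by positivity) (hφn n))
    (fun n => by have := hb n; positivity) (by positivity) hca (hsum.mul_left (2 / (a + 1))) ?_
  filter_upwards [eventually_rpow_add_one_le_mul_rpow γ hc] with n hn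
  have hnext : 0 ≤ a * φ^[n] r + b n := by have := hφn n; have := hb n; positivity
  calc ((n + 1 : ℕ) : ℝ) ^ γ * φ^[n + 1] r
      ≤ ((n : ℝ) + 1) ^ γ * (a * φ^[n] r + b n) := by push_cast; gcongr; exact hrec n r hr
    _ ≤ 2 / (a + 1) * (n : ℝ) ^ γ * (a * φ^[n] r + b n) := by gcongr
    _ = 2 / (a + 1) * a * ((n : ℝ) ^ γ * φ^[n] r) + 2 / (a + 1) * ((n : ℝ) ^ γ * b n) := by
      ring

theorem summable_of_linear_recursive_bound
    (φ : ℝ → ℝ)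
    (hφ_nonneg : ∀ r, 0 ≤ r → 0 ≤ φ r)
    (hφ_mono : ∀ x y, 0 ≤ x → x ≤ y → φ x ≤ φ y)
    (hφ_iter : ∀ r, 0 ≤ r → Filter.Tendsto (fun n => φ^[n] r) Filter.atTop (nhds 0))
    (a : ℝ) (ha : a ∈ Set.Ioo (0 : ℝ) 1)
    (b : ℕ → ℝ) (hb : ∀ n, 0 < b n)
    (hrec : ∀ (n : ℕ) (r : ℝ), 0 ≤ r → φ^[n + 1] r ≤ a * φ^[n] r + b n)
    (γ : ℝ) (hγ : 0 < γ)
    (hsum : Summable (fun n : ℕ => (n : ℝ) ^ γ * b n)) :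
    ∀ r : ℝ, 0 ≤ r → Summable (fun n : ℕ => (n : ℝ) ^ γ * φ^[n] r) :=
  summable_of_linear_recursive_bound_general φ hφ_nonneg a ha b hb hrec γ hsum
end

section
/- Let a ∈ (0,1), γ > 0, and (b_k) be a sequence of positive reals. Then the series Σ_{k≥0} ( b_k · Σ_{n≥k} n^γ a^{n−k} ) converges if and only if the series Σ_{k≥0} k^γ · b_k converges. -/
open Real

lemma rpow_add_le (γ : ℝ) (hγ : 0 < γ) (x y : ℝ) (hx : 0 ≤ x) (hy : 0 ≤ y) :
    (x + y) ^ γ ≤ 2 ^ γ * (x ^ γ + y ^ γ) := by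
  have h1 : x + y ≤ 2 * max x y := by
    rcases le_total x y with h | h
    · simp [max_eq_right h]; linarith
    · simp [max_eq_left h]; linarith
  have h2 : (x + y) ^ γ ≤ (2 * max x y) ^ γ :=
    Real.rpow_le_rpow (by linarith) h1 hγ.le
  have h3 : (2 * max x y) ^ γ = 2 ^ γ * (max x y) ^ γ :=
    Real.mul_rpow (by norm_num) (le_max_of_le_left hx)
  have h4 : (max x y) ^ γ ≤ x ^ γ + y ^ γ := by
    rcases le_total x y with h | h
    · rw [max_eq_right h]
      have := Real.rpow_nonneg hx γ; linarith
    · rw [max_eq_left h]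
      have := Real.rpow_nonneg hy γ; linarith
  calc (x + y) ^ γ ≤ 2 ^ γ * (max x y) ^ γ := by rw [← h3]; exact h2
    _ ≤ 2 ^ γ * (x ^ γ + y ^ γ) := by
        have : (0:ℝ) < 2 ^ γ := Real.rpow_pos_of_pos (by norm_num) γ
        nlinarith

lemma summable_rpow_mul_geom (a γ : ℝ) (ha : a ∈ Set.Ioo (0 : ℝ) 1) (hγ : 0 < γ) :
    Summable (fun j : ℕ => (j : ℝ) ^ γ * a ^ j) := by
  obtain ⟨ha0, ha1⟩ := ha
  set m := ⌈γ⌉₊ with hm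
  have hsm : Summable (fun j : ℕ => (j : ℝ) ^ m * a ^ j) := by
    have : ‖a‖ < 1 := by rw [Real.norm_eq_abs, abs_of_pos ha0]; exact ha1
    exact summable_pow_mul_geometric_of_norm_lt_one m this
  refine Summable.of_nonneg_of_le (fun j => ?_) (fun j => ?_) hsm
  · positivity
  · rcases Nat.eq_zero_or_pos j with rfl | hj
    · simp [Real.zero_rpow hγ.ne']
    · have h1 : (1:ℝ) ≤ (j:ℝ) := by exact_mod_cast hj
      have : (j:ℝ) ^ γ ≤ (j:ℝ) ^ (m:ℝ) :=
        Real.rpow_le_rpow_of_exponent_le h1 (Nat.le_ceil γ)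
      rw [Real.rpow_natCast] at this
      exact mul_le_mul_of_nonneg_right this (pow_nonneg ha0.le j)

theorem double_series_summable_iff
    (a γ : ℝ) (ha : a ∈ Set.Ioo (0 : ℝ) 1) (hγ : 0 < γ)
    (b : ℕ → ℝ) (hb : ∀ k, 0 < b k) :
    Summable (fun k : ℕ => b k * ∑' j : ℕ, ((k + j : ℕ) : ℝ) ^ γ * a ^ j) ↔
      Summable (fun k : ℕ => (k : ℝ) ^ γ * b k) := by
  obtain ⟨ha0, ha1⟩ := ha
  have hageom : Summable (fun j : ℕ => a ^ j) := summable_geometric_of_lt_one ha0.le ha1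
  have hC : Summable (fun j : ℕ => (j : ℝ) ^ γ * a ^ j) :=
    summable_rpow_mul_geom a γ ⟨ha0, ha1⟩ hγ
  set C := ∑' j : ℕ, (j : ℝ) ^ γ * a ^ j with hCdef
  -- inner summability
  have hinner : ∀ k : ℕ, Summable (fun j : ℕ => ((k + j : ℕ) : ℝ) ^ γ * a ^ j) := by
    intro k
    refine Summable.of_nonneg_of_le (fun j => ?_) (fun j => ?_)
      (((hageom.mul_left ((k:ℝ)^γ)).add hC).mul_left (2 ^ γ))
    · positivity
    · have hb1 : ((k + j : ℕ) : ℝ) ^ γ ≤ 2 ^ γ * ((k:ℝ)^γ + (j:ℝ)^γ) := by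
        push_cast
        exact rpow_add_le γ hγ _ _ (Nat.cast_nonneg k) (Nat.cast_nonneg j)
      have haj : (0:ℝ) ≤ a ^ j := pow_nonneg ha0.le j
      calc ((k + j : ℕ) : ℝ) ^ γ * a ^ j
          ≤ (2 ^ γ * ((k:ℝ)^γ + (j:ℝ)^γ)) * a ^ j := mul_le_mul_of_nonneg_right hb1 haj
        _ = 2 ^ γ * ((k:ℝ)^γ * a ^ j + (j:ℝ)^γ * a ^ j) := by ring
  -- lower bound: k^γ ≤ S k
  have hlow : ∀ k : ℕ, (k:ℝ)^γ ≤ ∑' j : ℕ, ((k + j : ℕ) : ℝ) ^ γ * a ^ j := by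
    intro k
    have := Summable.le_tsum (hinner k) 0 (fun j _ => by positivity)
    simpa using this
  have hSnonneg : ∀ k : ℕ, 0 ≤ ∑' j : ℕ, ((k + j : ℕ) : ℝ) ^ γ * a ^ j := by
    intro k
    exact le_trans (Real.rpow_nonneg (Nat.cast_nonneg k) γ) (hlow k)
  -- upper bound
  have hup : ∀ k : ℕ, (∑' j : ℕ, ((k + j : ℕ) : ℝ) ^ γ * a ^ j)
      ≤ 2 ^ γ * ((k:ℝ)^γ * (1 - a)⁻¹ + C) := by
    intro k
    have hle : ∀ j : ℕ, ((k + j : ℕ) : ℝ) ^ γ * a ^ j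
        ≤ 2 ^ γ * ((k:ℝ)^γ * a ^ j + (j:ℝ)^γ * a ^ j) := by
      intro j
      have hb1 : ((k + j : ℕ) : ℝ) ^ γ ≤ 2 ^ γ * ((k:ℝ)^γ + (j:ℝ)^γ) := by
        push_cast
        exact rpow_add_le γ hγ _ _ (Nat.cast_nonneg k) (Nat.cast_nonneg j)
      have haj : (0:ℝ) ≤ a ^ j := pow_nonneg ha0.le j
      calc ((k + j : ℕ) : ℝ) ^ γ * a ^ j
          ≤ (2 ^ γ * ((k:ℝ)^γ + (j:ℝ)^γ)) * a ^ j := mul_le_mul_of_nonneg_right hb1 haj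
        _ = 2 ^ γ * ((k:ℝ)^γ * a ^ j + (j:ℝ)^γ * a ^ j) := by ring
    have hsum2 : Summable (fun j : ℕ => 2 ^ γ * ((k:ℝ)^γ * a ^ j + (j:ℝ)^γ * a ^ j)) :=
      ((hageom.mul_left ((k:ℝ)^γ)).add hC).mul_left (2 ^ γ)
    have := Summable.tsum_le_tsum hle (hinner k) hsum2
    calc (∑' j : ℕ, ((k + j : ℕ) : ℝ) ^ γ * a ^ j)
        ≤ ∑' j : ℕ, 2 ^ γ * ((k:ℝ)^γ * a ^ j + (j:ℝ)^γ * a ^ j) := this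
      _ = 2 ^ γ * ((k:ℝ)^γ * (1 - a)⁻¹ + C) := by
          rw [tsum_mul_left, Summable.tsum_add (hageom.mul_left ((k:ℝ)^γ)) hC,
            tsum_mul_left, tsum_geometric_of_lt_one ha0.le ha1]
  constructor
  · intro h
    refine Summable.of_nonneg_of_le (fun k => ?_) (fun k => ?_) h
    · exact mul_nonneg (Real.rpow_nonneg (Nat.cast_nonneg k) γ) (hb k).le
    · calc (k:ℝ)^γ * b k ≤ (∑' j : ℕ, ((k + j : ℕ) : ℝ) ^ γ * a ^ j) * b k :=
          mul_le_mul_of_nonneg_right (hlow k) (hb k).le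
        _ = b k * ∑' j : ℕ, ((k + j : ℕ) : ℝ) ^ γ * a ^ j := by ring
  · intro h
    -- first: Summable b
    have hbsum : Summable b := by
      have h1 : Summable (fun k : ℕ => ((k+1:ℕ):ℝ)^γ * b (k+1)) :=
        ((summable_nat_add_iff 1).mpr h)
      have h2 : Summable (fun k : ℕ => b (k+1)) := by
        refine Summable.of_nonneg_of_le (fun k => (hb _).le) (fun k => ?_) h1
        have h1 : (1:ℝ) ≤ ((k+1:ℕ):ℝ) := by exact_mod_cast Nat.succ_le_succ (Nat.zero_le k)
        have : (1:ℝ) ≤ ((k+1:ℕ):ℝ)^γ := Real.one_le_rpow h1 hγ.le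
        nlinarith [(hb (k+1)).le, this]
      exact (summable_nat_add_iff 1).mp h2
    refine Summable.of_nonneg_of_le (fun k => mul_nonneg (hb k).le (hSnonneg k)) (fun k => ?_)
      (((h.mul_left (2 ^ γ * (1 - a)⁻¹)).add (hbsum.mul_left (2 ^ γ * C))))
    calc b k * ∑' j : ℕ, ((k + j : ℕ) : ℝ) ^ γ * a ^ j
        ≤ b k * (2 ^ γ * ((k:ℝ)^γ * (1 - a)⁻¹ + C)) :=
          mul_le_mul_of_nonneg_left (hup k) (hb k).le
      _ = 2 ^ γ * (1 - a)⁻¹ * ((k:ℝ)^γ * b k) + 2 ^ γ * C * b k := by ring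
end

section
/- Let γ > 0 and ε > 0, and let φ be a comparison function for which there exist positive reals b_n such that φ^[n+1](r) ≤ ((n−1)/n)^{ε+1+γ} · φ^[n](r) + b_n for every n ≥ 1 and every r ≥ 0. If the series Σ_{n≥0} b_n · n^{ε+1+γ} converges, then Σ_{n≥1} n^γ · φ^[n](r) converges for every r ≥ 0. -/
/-!
Multiplying the recursion by `n ^ p`, with `p = ε + 1 + γ`, turns it into
`n ^ p · φ^[n+1] r ≤ (n - 1) ^ p · φ^[n] r + b n · n ^ p`, which telescopes: `n ^ p · φ^[n+1] r`
is bounded by the partial sums of `∑ b n · n ^ p`, hence by a constant `B`. So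
`n ^ γ · φ^[n] r = O(n ^ (γ - p)) = O(n ^ (-(1 + ε)))`, a summable rate.
-/

open Finset Filter

lemma rpow_mul_le_sum_range_of_le_rpow_mul_add {p : ℝ} (hp : p ≠ 0) {a c : ℕ → ℝ}
    (h : ∀ n : ℕ, 1 ≤ n → a (n + 1) ≤ (((n : ℝ) - 1) / n) ^ p * a n + c n) (n : ℕ) :
    (n : ℝ) ^ p * a (n + 1) ≤ ∑ k ∈ range (n + 1), c k * (k : ℝ) ^ p := by
  induction n with
  | zero => simp [Real.zero_rpow hp]
  | succ m ih =>
    have hm : (0 : ℝ) < (m : ℝ) + 1 := by positivity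
    have hstep := h (m + 1) (by omega)
    rw [Nat.cast_succ, add_sub_cancel_right,
      Real.div_rpow m.cast_nonneg hm.le] at hstep
    have hmul : ((m : ℝ) + 1) ^ p * a (m + 2) ≤
        (m : ℝ) ^ p * a (m + 1) + c (m + 1) * ((m : ℝ) + 1) ^ p :=
      calc ((m : ℝ) + 1) ^ p * a (m + 2)
          ≤ ((m : ℝ) + 1) ^ p * ((m : ℝ) ^ p / ((m : ℝ) + 1) ^ p * a (m + 1) + c (m + 1)) :=
            mul_le_mul_of_nonneg_left hstep (Real.rpow_nonneg hm.le p)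
        _ = (m : ℝ) ^ p * a (m + 1) + c (m + 1) * ((m : ℝ) + 1) ^ p := by
            field_simp [(Real.rpow_pos_of_pos hm p).ne']
    rw [sum_range_succ, Nat.cast_succ]
    linarith

lemma summable_rpow_mul_of_rpow_mul_succ_le {γ p B : ℝ} (hγ : 0 ≤ γ) (hγp : γ - p < -1)
    {a : ℕ → ℝ} (ha : ∀ n, 0 ≤ a n) (hB : ∀ n : ℕ, (n : ℝ) ^ p * a (n + 1) ≤ B) :
    Summable (fun n : ℕ => (n : ℝ) ^ γ * a n) := by
  rw [← summable_nat_add_iff 1]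
  refine Summable.of_norm_bounded_eventually_nat
    (((Real.summable_nat_rpow.mpr hγp).mul_left (2 ^ γ)).mul_right B) ?_
  filter_upwards [eventually_ge_atTop 1] with n hn
  have hn : (1 : ℝ) ≤ n := by exact_mod_cast hn
  have hn0 : (0 : ℝ) < n := by linarith
  rw [Real.norm_of_nonneg (mul_nonneg (by positivity) (ha _))]
  calc ((n + 1 : ℕ) : ℝ) ^ γ * a (n + 1)
      ≤ (2 * (n : ℝ)) ^ γ * a (n + 1) := by
        gcongr
        · exact ha _
        · push_cast; linarith
    _ = 2 ^ γ * (n : ℝ) ^ (γ - p) * ((n : ℝ) ^ p * a (n + 1)) := by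
        rw [Real.mul_rpow zero_le_two hn0.le, Real.rpow_sub hn0]
        field_simp [(Real.rpow_pos_of_pos hn0 p).ne']
    _ ≤ 2 ^ γ * (n : ℝ) ^ (γ - p) * B := by gcongr; exact hB n

theorem summable_of_variable_coefficient_bound_general
    (γ ε : ℝ) (hγ : 0 < γ) (hε : 0 < ε)
    (φ : ℝ → ℝ)
    (hφ_nonneg : ∀ r, 0 ≤ r → 0 ≤ φ r)
    (b : ℕ → ℝ)
    (hrec : ∀ n : ℕ, 1 ≤ n → ∀ r : ℝ, 0 ≤ r →
      φ^[n + 1] r ≤ (((n : ℝ) - 1) / n) ^ (ε + 1 + γ) * φ^[n] r + b n)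
    (hsum : Summable (fun n : ℕ => b n * (n : ℝ) ^ (ε + 1 + γ))) :
    ∀ r : ℝ, 0 ≤ r → Summable (fun n : ℕ => (n : ℝ) ^ γ * φ^[n] r) := by
  intro r hr
  have hiter_nonneg : ∀ n, 0 ≤ φ^[n] r := fun n =>
    Set.MapsTo.iterate (s := Set.Ici 0) (fun x hx => hφ_nonneg x hx) n hr
  obtain ⟨B, hB⟩ := hsum.tendsto_sum_tsum_nat.bddAbove_range
  have htelescoped : ∀ n : ℕ, (n : ℝ) ^ (ε + 1 + γ) * φ^[n + 1] r ≤ B := fun n =>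
    (rpow_mul_le_sum_range_of_le_rpow_mul_add (a := fun k => φ^[k] r) (by positivity)
      (fun k hk => hrec k hk r hr) n).trans (hB ⟨n + 1, rfl⟩)
  exact summable_rpow_mul_of_rpow_mul_succ_le hγ.le (by linarith) hiter_nonneg htelescoped

theorem summable_of_variable_coefficient_bound
    (γ ε : ℝ) (hγ : 0 < γ) (hε : 0 < ε)
    (φ : ℝ → ℝ)
    (hφ_nonneg : ∀ r, 0 ≤ r → 0 ≤ φ r)
    (hφ_mono : ∀ x y, 0 ≤ x → x ≤ y → φ x ≤ φ y)
    (hφ_iter : ∀ r, 0 ≤ r → Filter.Tendsto (fun n => φ^[n] r) Filter.atTop (nhds 0))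
    (b : ℕ → ℝ) (hb : ∀ n, 0 < b n)
    (hrec : ∀ n : ℕ, 1 ≤ n → ∀ r : ℝ, 0 ≤ r →
      φ^[n + 1] r ≤ (((n : ℝ) - 1) / n) ^ (ε + 1 + γ) * φ^[n] r + b n)
    (hsum : Summable (fun n : ℕ => b n * (n : ℝ) ^ (ε + 1 + γ))) :
    ∀ r : ℝ, 0 ≤ r → Summable (fun n : ℕ => (n : ℝ) ^ γ * φ^[n] r) :=
  summable_of_variable_coefficient_bound_general γ ε hγ hε φ hφ_nonneg b hrec hsum
end

section
/- Let b > 1 and let φ : [0,∞) → [0,∞) be increasing such that there exist a ∈ (0,1) and a convergent series Σ b_n of positive reals with b^{n+1} φ^[n+1](r) ≤ a·b^n φ^[n](r) + b_n for every n ∈ ℕ and r ≥ 0. Then for every γ > 1 the series Σ_{n≥1} n^γ · φ^[n](r) converges for every r ≥ 0. -/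
theorem Psi_b_subset_Gamma_gamma
    (b : ℝ) (hb : 1 < b)
    (φ : ℝ → ℝ)
    (hφ_nonneg : ∀ r, 0 ≤ r → 0 ≤ φ r)
    (hφ_mono : ∀ x y, 0 ≤ x → x ≤ y → φ x ≤ φ y)
    (a : ℝ) (ha : a ∈ Set.Ioo (0 : ℝ) 1)
    (bseq : ℕ → ℝ) (hbseq : ∀ n, 0 < bseq n) (hbsum : Summable bseq)
    (hrec : ∀ (n : ℕ) (r : ℝ), 0 ≤ r →
      b ^ (n + 1) * φ^[n + 1] r ≤ a * b ^ n * φ^[n] r + bseq n) :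
    ∀ γ : ℝ, 1 < γ → ∀ r : ℝ, 0 ≤ r →
      Summable (fun n : ℕ => (n : ℝ) ^ γ * φ^[n] r) := by
  intro γ hγ r hr
  obtain ⟨ha0, ha1⟩ := ha
  have hb0 : (0:ℝ) < b := lt_trans one_pos hb
  -- nonnegativity of iterates
  have hiter : ∀ n, 0 ≤ φ^[n] r := by
    intro n
    induction n with
    | zero => simpa using hr
    | succ n ih =>
        rw [Function.iterate_succ_apply']
        exact hφ_nonneg _ ih
  -- bound on bseq
  set B : ℝ := ∑' n, bseq n with hB
  have hbB : ∀ n, bseq n ≤ B := fun n => Summable.le_tsum hbsum n (fun i _ => (hbseq i).le)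
  have hB0 : 0 ≤ B := le_trans (hbseq 0).le (hbB 0)
  set M : ℝ := max r (B / (1 - a)) with hM
  have h1a : (0:ℝ) < 1 - a := by linarith
  have hM0 : 0 ≤ M := le_trans hr (le_max_left _ _)
  -- c_n := b^n * φ^[n] r ≤ M
  have hc : ∀ n, b ^ n * φ^[n] r ≤ M := by
    intro n
    induction n with
    | zero =>
        rw [pow_zero, Function.iterate_zero_apply, one_mul]
        exact le_max_left _ _
    | succ n ih =>
        have h2 := hrec n r hr
        have h3 : a * b ^ n * φ^[n] r ≤ a * M := by
          rw [mul_assoc]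
          exact mul_le_mul_of_nonneg_left ih ha0.le
        have hBM : B ≤ (1 - a) * M := by
          have : B / (1 - a) ≤ M := le_max_right _ _
          calc B = (1 - a) * (B / (1 - a)) := by field_simp
          _ ≤ (1 - a) * M := mul_le_mul_of_nonneg_left this h1a.le
        nlinarith [hbB n]
  -- so φ^[n] r ≤ M / b^n, i.e. n^γ * φ^[n] r ≤ M * n^γ * (1/b)^n
  set k : ℕ := ⌈γ⌉₊ with hk
  have hγk : γ ≤ (k : ℝ) := Nat.le_ceil γ
  have hsum : Summable (fun n : ℕ => M * ((n:ℝ) ^ k * (1/b) ^ n)) := by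
    apply Summable.mul_left
    apply summable_pow_mul_geometric_of_norm_lt_one
    rw [Real.norm_eq_abs, abs_of_pos (by positivity), div_lt_one hb0]
    linarith
  apply Summable.of_nonneg_of_le _ _ hsum
  · intro n
    have : (0:ℝ) ≤ (n:ℝ) ^ γ := Real.rpow_nonneg (Nat.cast_nonneg n) γ
    exact mul_nonneg this (hiter n)
  · intro n
    have hφn : φ^[n] r ≤ M * (1/b) ^ n := by
      have := hc n
      rw [one_div, inv_pow, ← div_eq_mul_inv, le_div_iff₀ (by positivity)]
      linarith [hc n]
    have hnγ : (n:ℝ) ^ γ ≤ (n:ℝ) ^ k := by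
      rcases Nat.eq_zero_or_pos n with h | h
      · subst h
        simp [Real.zero_rpow (by linarith : γ ≠ 0)]
      · rw [← Real.rpow_natCast (n:ℝ) k]
        exact Real.rpow_le_rpow_of_exponent_le (by exact_mod_cast h) hγk
    calc (n:ℝ) ^ γ * φ^[n] r ≤ (n:ℝ) ^ k * (M * (1/b) ^ n) := by
          apply mul_le_mul hnγ hφn (hiter n)
          positivity
      _ = M * ((n:ℝ) ^ k * (1/b) ^ n) := by ring
end

section
/- Define φ : [0,∞) → [0,∞) by φ(x) = x − x^{4/3} for x ∈ [0, 27/64] and φ(x) = 27/256 for x > 27/64. Then φ is increasing and for every γ ∈ (0,2) the series Σ_{n≥1} n^γ · φ^[n](r) converges for every r ≥ 0. -/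
/-!
Substituting `t = s³` turns `t - t^{4/3}` into the polynomial `s³ - s⁴`, increasing on `[0, 3/4]`;
writing `φ x = g (min x (27/64))` with `g t = t - t^{4/3}` then shows that `φ` is increasing on
`[0, ∞)`. Since `g ((3/m)³) = 27/m³ - 81/m⁴ ≤ (3/(m+1))³`, monotonicity propagates the bound
`φ^[n] r ≤ (3/(n+3))³` from `φ r ≤ 27/256`, so `n^γ φ^[n] r = O(n^{γ-3})` is summable for `γ < 2`.
-/

open Real Set Filter

lemma summable_rpow_mul_of_le_div_rpow {a : ℕ → ℝ} {γ p C : ℝ} (hp : γ + 1 < p)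
    (ha₀ : ∀ n, 0 ≤ a n) (ha : ∀ n, 1 ≤ n → a n ≤ C / (n : ℝ) ^ p) :
    Summable fun n : ℕ => (n : ℝ) ^ γ * a n := by
  refine .of_norm_bounded_eventually_nat
    ((summable_nat_rpow (p := γ - p)).2 (by linarith) |>.mul_left C) ?_
  filter_upwards [eventually_ge_atTop 1] with n hn
  have hn₀ : (0 : ℝ) < n := by exact_mod_cast hn
  rw [norm_of_nonneg (mul_nonneg (by positivity) (ha₀ n)), rpow_sub hn₀, mul_div_left_comm]
  exact mul_le_mul_of_nonneg_left (ha n hn) (by positivity)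

lemma monotoneOn_pow_three_sub_pow_four :
    MonotoneOn (fun s : ℝ => s ^ 3 - s ^ 4) (Icc 0 (3 / 4)) := by
  intro s ⟨hs, hs'⟩ u ⟨hu, hu'⟩ hsu
  -- `4 * hquot = 4 (3/4 - u)(u² + us + s²) + 4 (3/4 - s) s² + (u - s)(u + 2s)`
  have hquot : 0 ≤ u ^ 2 + u * s + s ^ 2 - (u + s) * (u ^ 2 + s ^ 2) := by
    nlinarith [mul_nonneg (sub_nonneg.2 hu') (by positivity : 0 ≤ u ^ 2 + u * s + s ^ 2),
      mul_nonneg (sub_nonneg.2 hs') (sq_nonneg s),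
      mul_nonneg (sub_nonneg.2 hsu) (by positivity : 0 ≤ u + 2 * s)]
  have hdiff : u ^ 3 - u ^ 4 - (s ^ 3 - s ^ 4) =
      (u - s) * (u ^ 2 + u * s + s ^ 2 - (u + s) * (u ^ 2 + s ^ 2)) := by ring
  show s ^ 3 - s ^ 4 ≤ u ^ 3 - u ^ 4
  nlinarith [mul_nonneg (sub_nonneg.2 hsu) hquot]

lemma sub_rpow_four_thirds_eq {t : ℝ} (ht : 0 ≤ t) :
    t - t ^ ((4 : ℝ) / 3) = (t ^ ((1 : ℝ) / 3)) ^ 3 - (t ^ ((1 : ℝ) / 3)) ^ 4 := by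
  simp only [← rpow_natCast, ← rpow_mul ht]
  norm_num

lemma pow_three_rpow_one_third {a : ℝ} (ha : 0 ≤ a) : (a ^ 3) ^ ((1 : ℝ) / 3) = a := by
  rw [← rpow_natCast, ← rpow_mul ha]
  norm_num

lemma pow_three_sub_rpow_four_thirds {a : ℝ} (ha : 0 ≤ a) :
    a ^ 3 - (a ^ 3) ^ ((4 : ℝ) / 3) = a ^ 3 - a ^ 4 := by
  rw [sub_rpow_four_thirds_eq (by positivity), pow_three_rpow_one_third ha]

lemma monotoneOn_sub_rpow_four_thirds :
    MonotoneOn (fun t : ℝ => t - t ^ ((4 : ℝ) / 3)) (Icc 0 (27 / 64)) := by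
  have hroot : MapsTo (fun t : ℝ => t ^ ((1 : ℝ) / 3)) (Icc 0 (27 / 64)) (Icc 0 (3 / 4)) := by
    rintro t ⟨ht, ht'⟩
    refine ⟨by positivity, ?_⟩
    calc t ^ ((1 : ℝ) / 3) ≤ ((3 / 4) ^ 3) ^ ((1 : ℝ) / 3) :=
          rpow_le_rpow ht (ht'.trans_eq (by norm_num)) (by norm_num)
      _ = 3 / 4 := pow_three_rpow_one_third (by norm_num)
  intro s hs t ht hst
  simp only [sub_rpow_four_thirds_eq hs.1, sub_rpow_four_thirds_eq ht.1]
  exact monotoneOn_pow_three_sub_pow_four (hroot hs) (hroot ht) (rpow_le_rpow hs.1 hst (by norm_num))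

lemma pow_three_sub_pow_four_div_le {m : ℝ} (hm : 0 < m) :
    (3 / m) ^ 3 - (3 / m) ^ 4 ≤ (3 / (m + 1)) ^ 3 := by
  rw [div_pow, div_pow, div_pow, div_sub_div _ _ (by positivity) (by positivity),
    div_le_div_iff₀ (by positivity) (by positivity)]
  nlinarith [pow_pos hm 3, pow_pos hm 4, pow_pos hm 5, pow_pos hm 6]

noncomputable def phi (x : ℝ) : ℝ :=
  if x ≤ 27 / 64 then x - x ^ ((4 : ℝ) / 3) else 27 / 256

lemma phi_twentyseven_sixtyfourths : phi (27 / 64) = 27 / 256 := by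
  rw [phi, if_pos le_rfl, show (27 / 64 : ℝ) = (3 / 4) ^ 3 by norm_num,
    pow_three_sub_rpow_four_thirds (by norm_num)]
  norm_num

lemma phi_eq_min (x : ℝ) :
    phi x = min x (27 / 64) - min x (27 / 64) ^ ((4 : ℝ) / 3) := by
  by_cases hx : x ≤ 27 / 64
  · rw [phi, if_pos hx, min_eq_left hx]
  · rw [phi, if_neg hx, min_eq_right (le_of_not_ge hx), ← phi_twentyseven_sixtyfourths, phi,
      if_pos le_rfl]

lemma mapsTo_min_Ici : MapsTo (fun x : ℝ => min x (27 / 64)) (Ici 0) (Icc 0 (27 / 64)) :=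
  fun _ hx => ⟨le_min hx (by norm_num), min_le_right _ _⟩

lemma monotoneOn_phi : MonotoneOn phi (Ici 0) := by
  intro x hx y hy hxy
  simp only [phi_eq_min]
  exact monotoneOn_sub_rpow_four_thirds (mapsTo_min_Ici hx) (mapsTo_min_Ici hy)
    (min_le_min_right _ hxy)

lemma phi_mem_Icc {x : ℝ} (hx : 0 ≤ x) : phi x ∈ Icc 0 (27 / 256) := by
  constructor
  · calc (0 : ℝ) = phi 0 := by norm_num [phi]
      _ ≤ phi x := monotoneOn_phi self_mem_Ici hx hx
  · rw [← phi_twentyseven_sixtyfourths, phi_eq_min, phi_eq_min (27 / 64), min_self]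
    exact monotoneOn_sub_rpow_four_thirds (mapsTo_min_Ici hx) ⟨by norm_num, le_rfl⟩
      (min_le_right _ _)

lemma mapsTo_phi : MapsTo phi (Ici 0) (Ici 0) := fun _ hx => (phi_mem_Icc hx).1

lemma phi_le_of_le_pow_three {x m : ℝ} (hx : 0 ≤ x) (hm : 4 ≤ m) (hxm : x ≤ (3 / m) ^ 3) :
    phi x ≤ (3 / (m + 1)) ^ 3 := by
  have hcube : (3 / m) ^ 3 ∈ Icc (0 : ℝ) (27 / 64) := by
    refine ⟨by positivity, ?_⟩
    calc (3 / m) ^ 3 ≤ (3 / 4) ^ 3 := by gcongr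
      _ = 27 / 64 := by norm_num
  calc phi x ≤ (3 / m) ^ 3 - ((3 / m) ^ 3) ^ ((4 : ℝ) / 3) := by
        rw [phi_eq_min]
        exact monotoneOn_sub_rpow_four_thirds (mapsTo_min_Ici hx) hcube
          ((min_le_left _ _).trans hxm)
    _ = (3 / m) ^ 3 - (3 / m) ^ 4 := pow_three_sub_rpow_four_thirds (by positivity)
    _ ≤ (3 / (m + 1)) ^ 3 := pow_three_sub_pow_four_div_le (by positivity)

lemma phi_iterate_le {r : ℝ} (hr : 0 ≤ r) {n : ℕ} (hn : 1 ≤ n) :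
    phi^[n] r ≤ (3 / (n + 3)) ^ 3 := by
  induction n, hn using Nat.le_induction with
  | base => norm_num; linarith [(phi_mem_Icc hr).2]
  | succ n hn ih =>
    rw [Function.iterate_succ_apply', Nat.cast_succ, add_right_comm]
    have hn' : (1 : ℝ) ≤ n := by exact_mod_cast hn
    exact phi_le_of_le_pow_three (mapsTo_phi.iterate n hr) (by linarith) ih

theorem example_phi_in_Gamma_gamma :
    ∀ φ : ℝ → ℝ,
      (φ = fun x => if x ≤ 27 / 64 then x - x ^ ((4 : ℝ) / 3) else 27 / 256) →
      (∀ x y : ℝ, 0 ≤ x → x ≤ y → φ x ≤ φ y) ∧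
      (∀ γ : ℝ, γ ∈ Set.Ioo (0 : ℝ) 2 → ∀ r : ℝ, 0 ≤ r →
        Summable (fun n : ℕ => (n : ℝ) ^ γ * φ^[n] r)) := by
  rintro φ rfl
  refine ⟨fun x y hx hxy => monotoneOn_phi hx (hx.trans hxy) hxy, fun γ hγ r hr => ?_⟩
  refine summable_rpow_mul_of_le_div_rpow (p := 3) (C := 27) (by linarith [hγ.2])
    (fun n => mapsTo_phi.iterate n hr) fun n hn => ?_
  have hn₀ : (0 : ℝ) < n := by exact_mod_cast hn
  calc phi^[n] r ≤ (3 / (n + 3)) ^ 3 := phi_iterate_le hr hn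
    _ ≤ (3 / n) ^ 3 := by gcongr; linarith
    _ = 27 / (n : ℝ) ^ (3 : ℝ) := by rw [rpow_ofNat]; ring
end

section
/- Define φ : [0,∞) → [0,∞) by φ(x) = x − x^{4/3} for x ∈ [0, 27/64] and φ(x) = 27/256 for x > 27/64. Then for every b > 1 there do NOT exist a ∈ (0,1) and a convergent series Σ b_n of positive reals such that b^{n+1} φ^[n+1](r) ≤ a·b^n φ^[n](r) + b_n for every n ∈ ℕ and r ≥ 0. -/
open Real Filter

theorem example_phi_not_in_Psi_b :
    ∀ φ : ℝ → ℝ,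
      (φ = fun x => if x ≤ 27 / 64 then x - x ^ ((4 : ℝ) / 3) else 27 / 256) →
      ∀ b : ℝ, 1 < b →
        ¬ ∃ (a : ℝ) (bseq : ℕ → ℝ),
          a ∈ Set.Ioo (0 : ℝ) 1 ∧ (∀ n, 0 < bseq n) ∧ Summable bseq ∧
          ∀ (n : ℕ) (r : ℝ), 0 ≤ r →
            b ^ (n + 1) * φ^[n + 1] r ≤ a * b ^ n * φ^[n] r + bseq n := by
  intro φ hφ b hb
  rintro ⟨a, bseq, ⟨ha0, ha1⟩, hpos, hsum, hineq⟩
  have hb0 : (0:ℝ) < b := lt_trans one_pos hb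
  set x : ℕ → ℝ := fun n => φ^[n] (1/8) with hx
  -- key lower/upper bounds on iterates
  have key : ∀ n : ℕ, 1/((n:ℝ)+2)^3 ≤ x n ∧ x n ≤ 27/64 := by
    intro n
    induction n with
    | zero => constructor <;> · simp [hx]; norm_num
    | succ n ih =>
      obtain ⟨h1, h2⟩ := ih
      have hk2 : (2:ℝ) ≤ (n:ℝ)+2 := by have := Nat.cast_nonneg (α := ℝ) n; linarith
      have hkpos : (0:ℝ) < (n:ℝ)+2 := by positivity
      have hxpos : 0 < x n := lt_of_lt_of_le (by positivity) h1
      have hstep : x (n+1) = φ (x n) := Function.iterate_succ_apply' φ n _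
      have hφx : φ (x n) = x n - (x n) ^ ((4:ℝ)/3) := by rw [hφ]; simp [h2]
      set s := (x n) ^ ((1:ℝ)/3) with hs
      have hs0 : 0 ≤ s := rpow_nonneg hxpos.le _
      have hs3 : s^3 = x n := by
        rw [hs, ← Real.rpow_natCast ((x n) ^ ((1:ℝ)/3)) 3, ← Real.rpow_mul hxpos.le]
        norm_num
      have hs4 : (x n) ^ ((4:ℝ)/3) = s^4 := by
        rw [hs, ← Real.rpow_natCast ((x n) ^ ((1:ℝ)/3)) 4, ← Real.rpow_mul hxpos.le]
        norm_num
      have hsub : s ≤ 3/4 := by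
        by_contra h
        push_neg at h
        have h3 : (3/4:ℝ)^3 < s^3 := pow_lt_pow_left₀ h (by norm_num) (by norm_num)
        rw [hs3] at h3
        norm_num at h3
        linarith
      have hslb : 1/((n:ℝ)+2) ≤ s := by
        by_contra h
        push_neg at h
        have h13 : (1/((n:ℝ)+2))^3 = 1/((n:ℝ)+2)^3 := by
          rw [div_pow]; norm_num
        have h3 : s^3 < (1/((n:ℝ)+2))^3 := pow_lt_pow_left₀ h hs0 (by norm_num)
        rw [hs3, h13] at h3
        linarith
      have hval : x (n+1) = s^3 - s^4 := by rw [hstep, hφx, hs4, hs3]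
      constructor
      · rw [hval]
        push_cast
        have hb1 : (1/((n:ℝ)+2))^3 - (1/((n:ℝ)+2))^4 ≤ s^3 - s^4 := by
          set t := 1/((n:ℝ)+2) with ht
          have ht0 : 0 < t := by positivity
          have hts : t ≤ s := hslb
          nlinarith [mul_nonneg (sub_nonneg.2 hts) (mul_nonneg hs0 hs0),
            mul_nonneg (sub_nonneg.2 hts) (mul_nonneg ht0.le ht0.le),
            mul_nonneg (sub_nonneg.2 hts) (mul_nonneg hs0 ht0.le),
            sq_nonneg (s+t), sq_nonneg (s-t), mul_pos ht0 ht0]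
        have hb2 : 1/(((n:ℝ)+1)+2)^3 ≤ (1/((n:ℝ)+2))^3 - (1/((n:ℝ)+2))^4 := by
          rw [div_le_iff₀ (by positivity)]
          have e : (1/((n:ℝ)+2))^3 - (1/((n:ℝ)+2))^4
              = (((n:ℝ)+2) - 1)/((n:ℝ)+2)^4 := by
            field_simp
          rw [e, div_mul_eq_mul_div, le_div_iff₀ (by positivity)]
          nlinarith [hk2, sq_nonneg ((n:ℝ)+2)]
        linarith
      · rw [hval]
        nlinarith [pow_le_pow_left₀ hs0 hsub 3, pow_nonneg hs0 4]
  -- boundedness of c n = b^n * x n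
  set c : ℕ → ℝ := fun n => b^n * x n with hc
  have hcnn : ∀ n, 0 ≤ c n := fun n =>
    mul_nonneg (pow_nonneg hb0.le n) (le_trans (by positivity) (key n).1)
  have hrec : ∀ n, c (n+1) ≤ c n + bseq n := by
    intro n
    have h := hineq n (1/8) (by norm_num)
    have : a * b^n * x n ≤ c n := by
      have : a * c n ≤ 1 * c n := mul_le_mul_of_nonneg_right ha1.le (hcnn n)
      calc a * b^n * x n = a * c n := by rw [hc]; ring
        _ ≤ 1 * c n := this
        _ = c n := one_mul _
    calc c (n+1) = b^(n+1) * φ^[n+1] (1/8) := rfl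
      _ ≤ a * b^n * φ^[n] (1/8) + bseq n := h
      _ = a * b^n * x n + bseq n := rfl
      _ ≤ c n + bseq n := by linarith
  have hbound : ∀ n, c n ≤ 1/8 + ∑' k, bseq k := by
    have hpart : ∀ n, c n ≤ c 0 + ∑ k ∈ Finset.range n, bseq k := by
      intro n
      induction n with
      | zero => simp
      | succ n ih =>
        rw [Finset.sum_range_succ]
        have := hrec n
        linarith
    intro n
    have hts : ∑ k ∈ Finset.range n, bseq k ≤ ∑' k, bseq k :=
      Summable.sum_le_tsum (Finset.range n) (fun i _ => (hpos i).le) hsum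
    have hc0 : c 0 = 1/8 := by simp [hc, hx]
    have := hpart n
    rw [hc0] at this
    linarith
  set M := 1/8 + ∑' k, bseq k with hM
  have hM0 : 0 < M := by
    have : 0 ≤ ∑' k, bseq k := tsum_nonneg (fun i => (hpos i).le)
    rw [hM]; linarith
  -- (n+2)^3 / b^n → 0
  have htend : Tendsto (fun n : ℕ => ((n:ℝ)+2)^3 / b^n) atTop (nhds 0) := by
    have h1 : Tendsto (fun n : ℕ => ((n+2:ℕ):ℝ)^3 / b^(n+2)) atTop (nhds 0) :=
      (tendsto_pow_const_div_const_pow_of_one_lt 3 hb).comp (tendsto_add_atTop_nat 2)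
    have h2 := h1.const_mul (b^2)
    rw [mul_zero] at h2
    refine h2.congr (fun n => ?_)
    push_cast
    rw [pow_add]
    field_simp
  have hev : ∀ᶠ n : ℕ in atTop, ((n:ℝ)+2)^3 / b^n < 1/M := by
    have h1M : (0:ℝ) < 1/M := by positivity
    exact (htend.eventually (eventually_lt_nhds h1M)).mono (fun n h => h)
  obtain ⟨n, hn⟩ := hev.exists
  -- derive contradiction
  have hd0 : (0:ℝ) < ((n:ℝ)+2)^3 := by positivity
  have hbn : (0:ℝ) < b^n := pow_pos hb0 n
  have hlt : M < b^n / ((n:ℝ)+2)^3 := by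
    rw [div_lt_div_iff₀ hbn hM0] at hn
    rw [lt_div_iff₀ hd0]
    nlinarith [hn]
  have hcl : b^n / ((n:ℝ)+2)^3 ≤ c n := by
    have h := (key n).1
    calc b^n / ((n:ℝ)+2)^3 = b^n * (1/((n:ℝ)+2)^3) := by ring
      _ ≤ b^n * x n := mul_le_mul_of_nonneg_left h hbn.le
      _ = c n := rfl
  exact lt_irrefl M (lt_of_lt_of_le hlt (le_trans hcl (hbound n)))
end

section
/- Define φ(x) = x − x^{4/3} for x ∈ [0, 27/64]. For any x₀ ∈ (0, 27/64], the sequence x_{n+1} = φ(x_n) satisfies lim_{n→∞} n³ · x_n = 27. -/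
/-!
Write `β = α - 1`. Along `x (n + 1) = x n * (1 - a * x n ^ β)`, the quantity `u n = x n ^ (-β)`
has increments `((1 - a t) ^ (-β) - 1) / t` with `t = x n ^ β → 0`, i.e. slopes at `0` of
`s ↦ (1 - a s) ^ (-β)`, whose derivative there is `a β`. By Stolz–Cesàro `u n / n → a β`, so
`n ^ (1 / β) * x n → (a β) ^ (-1 / β)`; for `a = 1`, `α = 4 / 3` this is `3 ^ 3 = 27`.
-/

open Filter Real Topology

theorem tendsto_div_natCast_of_tendsto_sub {u : ℕ → ℝ} {l : ℝ}
    (h : Tendsto (fun n => u (n + 1) - u n) atTop (𝓝 l)) :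
    Tendsto (fun n : ℕ => u n / n) atTop (𝓝 l) := by
  have hcesaro : Tendsto (fun n : ℕ => (n : ℝ)⁻¹ * (u n - u 0)) atTop (𝓝 l) :=
    h.cesaro.congr fun n => by rw [Finset.sum_range_sub u n]
  simpa using (hcesaro.add (tendsto_const_div_atTop_nhds_zero_nat (u 0))).congr' <| by
    filter_upwards [eventually_ne_atTop 0] with n hn
    field_simp
    ring

theorem hasDerivAt_one_sub_mul_rpow_neg (a β : ℝ) :
    HasDerivAt (fun s : ℝ => (1 - a * s) ^ (-β)) (a * β) 0 := by
  have hlin : HasDerivAt (fun s : ℝ => 1 - a * s) (-a) 0 := by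
    simpa using ((hasDerivAt_id (0 : ℝ)).const_mul a).const_sub 1
  have hpow : HasDerivAt (fun y : ℝ => y ^ (-β)) (-β) 1 := by
    simpa using Real.hasDerivAt_rpow_const (x := 1) (p := -β) (Or.inl one_ne_zero)
  exact (hpow.comp_of_eq 0 hlin (by simp)).congr_deriv (by ring)

theorem sub_mul_rpow_eq_mul {y : ℝ} (hy : 0 < y) (a α : ℝ) :
    y - a * y ^ α = y * (1 - a * y ^ (α - 1)) := by
  rw [rpow_sub_one hy.ne']
  field_simp

section Recursion

variable {a α : ℝ} {x : ℕ → ℝ}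

theorem pos_and_mul_rpow_lt_one_of_rec (ha : 0 ≤ a) (hα : 1 ≤ α)
    (hrec : ∀ n, x (n + 1) = x n - a * x n ^ α) (hx0 : 0 < x 0)
    (hx0' : a * x 0 ^ (α - 1) < 1) (n : ℕ) : 0 < x n ∧ a * x n ^ (α - 1) < 1 := by
  induction n with
  | zero => exact ⟨hx0, hx0'⟩
  | succ n ih =>
    obtain ⟨hpos, hlt⟩ := ih
    have hstep : x (n + 1) = x n * (1 - a * x n ^ (α - 1)) := by
      rw [hrec n, sub_mul_rpow_eq_mul hpos]
    have hpos' : 0 < x (n + 1) := hstep ▸ mul_pos hpos (by linarith)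
    have hle : x (n + 1) ≤ x n := by
      rw [hstep]
      have : 0 ≤ a * x n ^ (α - 1) := by positivity
      nlinarith
    refine ⟨hpos', lt_of_le_of_lt ?_ hlt⟩
    gcongr

theorem tendsto_zero_of_rec (ha : 0 < a) (hα : 0 < α) (hpos : ∀ n, 0 < x n)
    (hrec : ∀ n, x (n + 1) = x n - a * x n ^ α) : Tendsto x atTop (𝓝 0) := by
  have hanti : Antitone x := antitone_nat_of_succ_le fun n => by
    rw [hrec n]
    have := rpow_nonneg (hpos n).le α
    nlinarith
  have hconv := tendsto_atTop_ciInf hanti ⟨0, by rintro _ ⟨n, rfl⟩; exact (hpos n).le⟩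
  set L := ⨅ n, x n
  have hL : 0 ≤ L := le_ciInf fun n => (hpos n).le
  have hfixed : L = L - a * L ^ α := by
    refine tendsto_nhds_unique ((hconv.comp (tendsto_add_atTop_nat 1)).congr hrec) ?_
    exact hconv.sub ((hconv.rpow_const (Or.inr hα.le)).const_mul a)
  have hLα : L ^ α = 0 := by
    have : a * L ^ α = 0 := by linarith
    exact (mul_eq_zero.mp this).resolve_left ha.ne'
  rwa [(rpow_eq_zero hL hα.ne').mp hLα] at hconv

theorem tendsto_rpow_neg_div_natCast_of_rec (ha : 0 < a) (hα : 1 < α) (hpos : ∀ n, 0 < x n)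
    (hrec : ∀ n, x (n + 1) = x n - a * x n ^ α) :
    Tendsto (fun n : ℕ => x n ^ (-(α - 1)) / n) atTop (𝓝 (a * (α - 1))) := by
  set β := α - 1
  set t : ℕ → ℝ := fun n => x n ^ β
  have ht : Tendsto t atTop (𝓝[≠] 0) := by
    refine tendsto_nhdsWithin_of_tendsto_nhds_of_eventually_within _ ?_
      (Eventually.of_forall fun n => (rpow_pos_of_pos (hpos n) β).ne')
    simpa [zero_rpow (by linarith : β ≠ 0)] using
      (tendsto_zero_of_rec ha (by linarith) hpos hrec).rpow_const (p := β) (Or.inr (by linarith))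
  have hslope := (hasDerivAt_iff_tendsto_slope.mp (hasDerivAt_one_sub_mul_rpow_neg a β)).comp ht
  refine tendsto_div_natCast_of_tendsto_sub (hslope.congr fun n => ?_)
  have hstep : x (n + 1) = x n * (1 - a * t n) := by
    rw [hrec n, sub_mul_rpow_eq_mul (hpos n)]
  have hfactor : 0 ≤ 1 - a * t n :=
    (pos_of_mul_pos_right (hstep ▸ hpos (n + 1)) (hpos n).le).le
  rw [Function.comp_apply, slope_def_field, hstep, mul_rpow (hpos n).le hfactor,
    rpow_neg (hpos n).le]
  field_simp
  simp [t]

theorem tendsto_natCast_rpow_mul_of_rec (ha : 0 < a) (hα : 1 < α) (hpos : ∀ n, 0 < x n)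
    (hrec : ∀ n, x (n + 1) = x n - a * x n ^ α) :
    Tendsto (fun n : ℕ => (n : ℝ) ^ (α - 1)⁻¹ * x n) atTop
      (𝓝 ((a * (α - 1)) ^ (-(α - 1)⁻¹))) := by
  have hβ : α - 1 ≠ 0 := by linarith
  refine ((tendsto_rpow_neg_div_natCast_of_rec ha hα hpos hrec).rpow_const
    (Or.inl (by nlinarith))).congr fun n => ?_
  rw [div_rpow (rpow_nonneg (hpos n).le _) n.cast_nonneg, ← rpow_mul (hpos n).le,
    neg_mul_neg, mul_inv_cancel₀ hβ, rpow_one, rpow_neg n.cast_nonneg, div_inv_eq_mul, mul_comm]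

end Recursion

theorem cube_asymptotics_of_example_sequence
    (x : ℕ → ℝ) (hx0 : x 0 ∈ Set.Ioc (0 : ℝ) (27 / 64))
    (hrec : ∀ n : ℕ, x (n + 1) = x n - x n ^ ((4 : ℝ) / 3)) :
    Filter.Tendsto (fun n : ℕ => (n : ℝ) ^ 3 * x n) Filter.atTop (nhds 27) := by
  have hrec' : ∀ n, x (n + 1) = x n - 1 * x n ^ ((4 : ℝ) / 3) := by simpa using hrec
  have hx0' : 1 * x 0 ^ ((4 : ℝ) / 3 - 1) < 1 := by
    rw [one_mul]
    exact rpow_lt_one hx0.1.le (by linarith [hx0.2]) (by norm_num)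
  have hpos n := (pos_and_mul_rpow_lt_one_of_rec zero_le_one (by norm_num) hrec' hx0.1 hx0' n).1
  have h := tendsto_natCast_rpow_mul_of_rec one_pos (by norm_num) hpos hrec'
  norm_num at h
  simpa using h
end
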